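/- arXiv:2401.07038 — 10 statements merged into one kernel-verified Lean document; each statement's English description precedes it below -/
import Mathlib

section
/- Let ε be a real-valued random variable with E[log(1+|ε|)] < ∞, let φ ≠ 0 be a real number, and let p ∈ [0,1). Then, as y → ∞ (over positive reals), the ratio [(1−p)·E[log(1+|ε|)] + p·E[log(1+|φ·y+ε|)]] / log(1+y) converges to p. (This is the Foster–Lyapunov drift limit computed in the proof of Theorem 1: for the SNAR(1) transition kernel and the test function V(x)=log(1+|x|), E[V(y_t) | y_{t−1}=y]/V(y) → p as |y| → ∞.) -/
open MeasureTheory ProbabilityTheory Filter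

lemma log_one_add_abs_add_le (a e : ℝ) :
    Real.log (1 + |a + e|) ≤ Real.log (1 + |a|) + Real.log (1 + |e|) := by
  rw [← Real.log_mul (by positivity) (by positivity)]
  apply Real.log_le_log (by positivity)
  have h := abs_add_le a e
  have h1 := abs_nonneg a
  have h2 := abs_nonneg e
  nlinarith

lemma abs_log_one_add_abs_sub_le (a e : ℝ) :
    |Real.log (1 + |a + e|) - Real.log (1 + |a|)| ≤ Real.log (1 + |e|) := by
  rw [abs_sub_le_iff]
  constructor
  · linarith [log_one_add_abs_add_le a e]
  · have h := log_one_add_abs_add_le (a + e) (-e)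
    rw [add_neg_cancel_right, abs_neg] at h
    linarith

/-- **Foster–Lyapunov drift limit** for the SNAR(1) model with test function
`V(x) = log(1+|x|)`: if `E[log(1+|ε|)] < ∞`, `φ ≠ 0` and `p ∈ [0,1)`, then as `y → ∞`,
`((1−p)·E[log(1+|ε|)] + p·E[log(1+|φ·y+ε|)]) / log(1+y) → p`. -/
theorem snar_drift_limit
    {Ω : Type*} [MeasureSpace Ω] [IsProbabilityMeasure (ℙ : Measure Ω)]
    (ε : Ω → ℝ) (hε : Measurable ε)
    (hint : Integrable (fun ω => Real.log (1 + |ε ω|)) ℙ)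
    (φ : ℝ) (hφ : φ ≠ 0) (p : ℝ) (hp : p ∈ Set.Ico (0 : ℝ) 1) :
    Tendsto (fun y : ℝ =>
        ((1 - p) * (∫ ω, Real.log (1 + |ε ω|) ∂ℙ)
          + p * (∫ ω, Real.log (1 + |φ * y + ε ω|) ∂ℙ)) / Real.log (1 + y))
      atTop (nhds p) := by
  obtain ⟨hp0, hp1⟩ := hp
  set C : ℝ := ∫ ω, Real.log (1 + |ε ω|) ∂ℙ with hCdef
  have hCnn : 0 ≤ C := integral_nonneg fun ω =>
    Real.log_nonneg (by linarith [abs_nonneg (ε ω)])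
  have hφabs : (0:ℝ) < |φ| := abs_pos.mpr hφ
  -- integrability of the shifted log for each y
  have hintI : ∀ y : ℝ, Integrable (fun ω => Real.log (1 + |φ * y + ε ω|)) ℙ := by
    intro y
    refine Integrable.mono' ((integrable_const (Real.log (1 + |φ * y|))).add hint)
      (Real.measurable_log.comp (((hε.const_add (φ * y)).abs).const_add 1)).aestronglyMeasurable
      (Filter.Eventually.of_forall fun ω => ?_)
    rw [Real.norm_eq_abs, abs_of_nonneg (Real.log_nonneg (by linarith [abs_nonneg (φ * y + ε ω)]))]
    exact log_one_add_abs_add_le (φ * y) (ε ω)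
  -- the integral is within C of log(1+|φ y|)
  have hIest : ∀ y : ℝ,
      |(∫ ω, Real.log (1 + |φ * y + ε ω|) ∂ℙ) - Real.log (1 + |φ * y|)| ≤ C := by
    intro y
    have h1 : (∫ ω, Real.log (1 + |φ * y + ε ω|) ∂ℙ) - Real.log (1 + |φ * y|)
        = ∫ ω, (Real.log (1 + |φ * y + ε ω|) - Real.log (1 + |φ * y|)) ∂ℙ := by
      rw [integral_sub (hintI y) (integrable_const _), integral_const]
      simp
    rw [h1]
    rw [← Real.norm_eq_abs]
    refine (norm_integral_le_integral_norm _).trans ?_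
    simp only [Real.norm_eq_abs]
    exact integral_mono ((hintI y).sub (integrable_const _)).abs hint
      (fun ω => abs_log_one_add_abs_sub_le (φ * y) (ε ω))
  set B : ℝ := Real.log (1 + |φ|) + Real.log (1 + |φ|⁻¹) with hBdef
  have hlog1 : 0 ≤ Real.log (1 + |φ|) :=
    Real.log_nonneg (le_add_of_nonneg_right (abs_nonneg φ))
  have hlog2 : 0 ≤ Real.log (1 + |φ|⁻¹) :=
    Real.log_nonneg (le_add_of_nonneg_right (by positivity))
  have hBnn : 0 ≤ B := by rw [hBdef]; linarith
  -- log(1+|φ y|) is within B of log(1+y) for y ≥ 0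
  have hBest : ∀ y : ℝ, 0 ≤ y → |Real.log (1 + |φ * y|) - Real.log (1 + y)| ≤ B := by
    intro y hy
    rw [abs_mul, abs_of_nonneg hy]
    have hinv : (0:ℝ) < |φ|⁻¹ := by positivity
    rw [abs_le]
    constructor
    · -- log(1+y) - log(1+|φ|y) ≤ log(1+|φ|⁻¹) ≤ B
      have h1 : Real.log (1 + y) ≤ Real.log (1 + |φ|⁻¹) + Real.log (1 + |φ| * y) := by
        rw [← Real.log_mul (by positivity) (by positivity)]
        apply Real.log_le_log (by positivity)
        have : |φ|⁻¹ * (|φ| * y) = y := by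
          rw [← mul_assoc, inv_mul_cancel₀ (ne_of_gt hφabs), one_mul]
        nlinarith [mul_nonneg hφabs.le hy]
      rw [hBdef]; linarith
    · -- log(1+|φ|y) - log(1+y) ≤ log(1+|φ|) ≤ B
      have h1 : Real.log (1 + |φ| * y) ≤ Real.log (1 + |φ|) + Real.log (1 + y) := by
        rw [← Real.log_mul (by positivity) (by positivity)]
        apply Real.log_le_log (by positivity)
        nlinarith [mul_nonneg hφabs.le hy]
      rw [hBdef]; linarith
  set K : ℝ := (1 - p) * C + p * (C + B) with hKdef
  rw [← tendsto_sub_nhds_zero_iff]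
  apply squeeze_zero_norm' (a := fun y : ℝ => K / Real.log (1 + y))
  · filter_upwards [eventually_ge_atTop (1 : ℝ)] with y hy
    have hL : 0 < Real.log (1 + y) := Real.log_pos (by linarith)
    have hy0 : (0:ℝ) ≤ y := by linarith
    set I : ℝ := ∫ ω, Real.log (1 + |φ * y + ε ω|) ∂ℙ with hIdef
    set L : ℝ := Real.log (1 + y) with hLdef
    have heq : ((1 - p) * C + p * I) / L - p = ((1 - p) * C + p * (I - L)) / L := by
      field_simp
      ring
    rw [Real.norm_eq_abs, heq, abs_div, abs_of_pos hL]
    rw [div_le_div_iff_of_pos_right hL]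
    have h1 : |I - L| ≤ C + B := by
      calc |I - L| ≤ |I - Real.log (1 + |φ * y|)| + |Real.log (1 + |φ * y|) - L| :=
            abs_sub_le I _ L
        _ ≤ C + B := add_le_add (hIest y) (hBest y hy0)
    calc |(1 - p) * C + p * (I - L)| ≤ |(1 - p) * C| + |p * (I - L)| := abs_add_le _ _
      _ = (1 - p) * C + p * |I - L| := by
          rw [abs_mul, abs_mul, abs_of_nonneg (by linarith : (0:ℝ) ≤ 1 - p),
            abs_of_nonneg hCnn, abs_of_nonneg hp0]
      _ ≤ (1 - p) * C + p * (C + B) := by nlinarith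
      _ = K := rfl
  · exact Tendsto.div_atTop tendsto_const_nhds
      (Real.tendsto_log_atTop.comp (tendsto_atTop_add_const_left _ 1 tendsto_id))
end

section
/- Let (Ω, F, P) be a probability space carrying an i.i.d. family (ε_t)_{t∈ℤ} of real random variables with E[log⁺|ε_1|] < ∞ and such that ε_1 has an (a.e.) positive density on ℝ, and an i.i.d. family (s_t)_{t∈ℤ} of Bernoulli(p) random variables with p ∈ [0,1), the two families being mutually independent. Then for every φ ∈ ℝ there exists a process (y_t)_{t∈ℤ} of real random variables such that: (i) for every t ∈ ℤ, y_t = s_t φ |y_{t−1}| + ε_t almost surely; (ii) (nonanticipative) each y_t is measurable with respect to the σ-algebra generated by {(s_j, ε_j) : j ≤ t}; and (iii) (strictly stationary) the path (y_{t+1})_{t∈ℤ}, viewed as a random element of ℝ^ℤ with the product σ-algebra, has the same distribution as the path (y_t)_{t∈ℤ}. -/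
open MeasureTheory ProbabilityTheory

namespace SNAR



/-- value at time `0` of the SNAR(1) recursion assuming `s = 0` at time `-k`. -/
noncomputable def B (φ : ℝ) : ℕ → (ℤ → ℝ × ℝ) → ℝ
  | 0 => fun x => (x 0).2
  | (k+1) => fun x => (x 0).1 * φ * |B φ k (fun j => x (j - 1))| + (x 0).2

/-- `Q k x` : either the `s`-component vanishes at time `-k`, or it never vanishes
at nonpositive times. -/
def Q (k : ℕ) (x : ℤ → ℝ × ℝ) : Prop :=
  (x (-(k : ℤ))).1 = 0 ∨ ∀ j : ℕ, (x (-(j : ℤ))).1 ≠ 0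

lemma Q_exists (x : ℤ → ℝ × ℝ) : ∃ k, Q k x := by
  by_cases h : ∃ j : ℕ, (x (-(j : ℤ))).1 = 0
  · obtain ⟨j, hj⟩ := h; exact ⟨j, Or.inl hj⟩
  · push_neg at h; exact ⟨0, Or.inr h⟩

open Classical in
/-- the stationary solution map. -/
noncomputable def G (φ : ℝ) (x : ℤ → ℝ × ℝ) : ℝ :=
  B φ (Nat.find (Q_exists x)) x

lemma B_congr (φ : ℝ) : ∀ (k : ℕ) (x x' : ℤ → ℝ × ℝ),
    (∀ j : ℤ, j ≤ 0 → x j = x' j) → B φ k x = B φ k x'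
  | 0, x, x', h => by simp [B, h 0 le_rfl]
  | (k+1), x, x', h => by
      have h0 := h 0 le_rfl
      have hrec := B_congr φ k (fun j => x (j - 1)) (fun j => x' (j - 1))
        (fun j hj => h (j - 1) (by omega))
      simp [B, h0, hrec]

lemma measurable_B (φ : ℝ) : ∀ k, Measurable (B φ k)
  | 0 => measurable_snd.comp (measurable_pi_apply 0)
  | (k+1) => by
      have hshift : Measurable (fun (x : ℤ → ℝ × ℝ) (j : ℤ) => x (j - 1)) :=
        measurable_pi_lambda _ (fun j => measurable_pi_apply (j - 1))
      exact (((measurable_fst.comp (measurable_pi_apply 0)).mul_const φ).mul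
        (((measurable_B φ k).comp hshift).abs)).add
        (measurable_snd.comp (measurable_pi_apply 0))

lemma measurableSet_Q (k : ℕ) : MeasurableSet {x : ℤ → ℝ × ℝ | Q k x} := by
  have h1 : ∀ t : ℤ, MeasurableSet {x : ℤ → ℝ × ℝ | (x t).1 = 0} :=
    fun t => (measurable_fst.comp (measurable_pi_apply t)) (measurableSet_singleton 0)
  have : {x : ℤ → ℝ × ℝ | Q k x}
      = {x : ℤ → ℝ × ℝ | (x (-(k : ℤ))).1 = 0}
        ∪ ⋂ j : ℕ, {x : ℤ → ℝ × ℝ | (x (-(j : ℤ))).1 = 0}ᶜ := by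
    ext x; simp [Q]
  rw [this]
  exact (h1 _).union (MeasurableSet.iInter fun j => (h1 _).compl)

lemma measurable_G (φ : ℝ) : Measurable (G φ) := by
  classical
  exact Measurable.find (fun k => measurable_B φ k) measurableSet_Q Q_exists

lemma G_congr (φ : ℝ) {x x' : ℤ → ℝ × ℝ}
    (h : ∀ j : ℤ, j ≤ 0 → x j = x' j) : G φ x = G φ x' := by
  classical
  have hQ : ∀ k, Q k x ↔ Q k x' := by
    intro k
    have hx : ∀ j : ℕ, x (-(j : ℤ)) = x' (-(j : ℤ)) := fun j => h _ (by omega)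
    simp [Q, hx]
  have hfind : Nat.find (Q_exists x) = Nat.find (Q_exists x') := by
    apply le_antisymm
    · exact Nat.find_min' _ ((hQ _).2 (Nat.find_spec (Q_exists x')))
    · exact Nat.find_min' _ ((hQ _).1 (Nat.find_spec (Q_exists x)))
  rw [G, G, hfind]
  exact B_congr φ _ x x' h

lemma G_rec (φ : ℝ) {x : ℤ → ℝ × ℝ} (hx : ∃ k : ℕ, (x (-1 - (k : ℤ))).1 = 0) :
    G φ x = (x 0).1 * φ * |G φ (fun j => x (j - 1))| + (x 0).2 := by
  classical
  obtain ⟨k₀, hk₀⟩ := hx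
  have hnall : ¬ ∀ j : ℕ, (x (-(j : ℤ))).1 ≠ 0 := by
    intro hall
    apply hall (k₀ + 1)
    rw [show -((k₀ + 1 : ℕ) : ℤ) = -1 - (k₀ : ℤ) by omega]
    exact hk₀
  have hnall' : ¬ ∀ j : ℕ, ((fun j => x (j - 1)) (-(j : ℤ))).1 ≠ 0 := by
    intro hall
    apply hall k₀
    show (x (-(k₀ : ℤ) - 1)).1 = 0
    rw [show -(k₀ : ℤ) - 1 = -1 - (k₀ : ℤ) by ring]
    exact hk₀
  have hQ : ∀ k, Q k x ↔ (x (-(k : ℤ))).1 = 0 := by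
    intro k; simp [Q, hnall]
  have hQ' : ∀ k, Q k (fun j => x (j - 1)) ↔ (x (-(k : ℤ) - 1)).1 = 0 := by
    intro k; simp [Q, hnall']
  rcases hn : Nat.find (Q_exists x) with _ | m
  · -- the most recent zero is at time 0
    have h0 : (x 0).1 = 0 := by
      have := Nat.find_spec (Q_exists x)
      rw [hn, hQ 0] at this
      simpa using this
    rw [G, hn]
    simp [B, h0]
  · -- the most recent zero is at time -(m+1)
    have hm1 : (x (-((m + 1 : ℕ) : ℤ))).1 = 0 := by
      have := Nat.find_spec (Q_exists x)
      rwa [hn, hQ (m + 1)] at this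
    have hfind' : Nat.find (Q_exists (fun j => x (j - 1))) = m := by
      apply le_antisymm
      · refine Nat.find_min' _ ((hQ' m).2 ?_)
        have he : -(m : ℤ) - 1 = -((m + 1 : ℕ) : ℤ) := by omega
        rw [he]; exact hm1
      · by_contra hlt
        push_neg at hlt
        have hspec := Nat.find_spec (Q_exists (fun j => x (j - 1)))
        rw [hQ' _] at hspec
        set m' := Nat.find (Q_exists (fun j => x (j - 1))) with hm'
        have : Q (m' + 1) x := by
          rw [hQ]
          rw [show -((m' + 1 : ℕ) : ℤ) = -(m' : ℤ) - 1 by omega]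
          exact hspec
        have := Nat.find_min' (Q_exists x) this
        omega
    simp only [G]
    rw [hn, hfind']
    simp [B]


lemma bern_map_eq {Ω : Type*} [MeasureSpace Ω] [IsProbabilityMeasure (ℙ : Measure Ω)]
    {s : Ω → ℝ} (hs : Measurable s) {p : ℝ} (hp0 : 0 ≤ p) (hp1 : p ≤ 1)
    (h1 : ℙ {ω | s ω = 1} = ENNReal.ofReal p)
    (h0 : ℙ {ω | s ω = 0} = ENNReal.ofReal (1 - p)) :
    Measure.map s ℙ = ENNReal.ofReal (1 - p) • Measure.dirac (0 : ℝ)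
      + ENNReal.ofReal p • Measure.dirac 1 := by
  classical
  have hA0 : MeasurableSet {ω | s ω = 0} := hs (measurableSet_singleton 0)
  have hA1 : MeasurableSet {ω | s ω = 1} := hs (measurableSet_singleton 1)
  have hdisj : Disjoint {ω | s ω = 0} {ω | s ω = 1} := by
    rw [Set.disjoint_left]
    intro ω hω0 hω1
    simp only [Set.mem_setOf_eq] at hω0 hω1
    rw [hω0] at hω1; norm_num at hω1
  have hsum : ENNReal.ofReal (1 - p) + ENNReal.ofReal p = 1 := by
    rw [← ENNReal.ofReal_add (by linarith) hp0]
    norm_num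
  have hunion : ℙ ({ω | s ω = 0} ∪ {ω | s ω = 1}) = 1 := by
    rw [measure_union hdisj hA1, h0, h1, hsum]
  have hcompl : ℙ (({ω | s ω = 0} ∪ {ω | s ω = 1})ᶜ) = 0 := by
    rw [measure_compl (hA0.union hA1) (measure_ne_top _ _), hunion]
    simp
  ext C hC
  rw [Measure.map_apply hs hC]
  have hsplit : ℙ (s ⁻¹' C)
      = ℙ (s ⁻¹' C ∩ ({ω | s ω = 0} ∪ {ω | s ω = 1})) := by
    have := measure_inter_add_diff (μ := ℙ) (s ⁻¹' C) (hA0.union hA1)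
    have hdiff : ℙ (s ⁻¹' C \ ({ω | s ω = 0} ∪ {ω | s ω = 1})) = 0 :=
      measure_mono_null (Set.diff_subset_compl _ _) hcompl
    rw [hdiff, add_zero] at this
    exact this.symm
  have hinter : s ⁻¹' C ∩ ({ω | s ω = 0} ∪ {ω | s ω = 1})
      = (s ⁻¹' C ∩ {ω | s ω = 0}) ∪ (s ⁻¹' C ∩ {ω | s ω = 1}) := by
    rw [Set.inter_union_distrib_left]
  have h00 : s ⁻¹' C ∩ {ω | s ω = 0} = if (0 : ℝ) ∈ C then {ω | s ω = 0} else ∅ := by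
    split_ifs with h
    · ext ω; simp only [Set.mem_inter_iff, Set.mem_preimage, Set.mem_setOf_eq]
      constructor
      · exact fun hh => hh.2
      · intro hh; exact ⟨by rw [hh]; exact h, hh⟩
    · ext ω; simp only [Set.mem_inter_iff, Set.mem_preimage, Set.mem_setOf_eq,
        Set.mem_empty_iff_false, iff_false, not_and]
      intro hc he; rw [he] at hc; exact h hc
  have h11 : s ⁻¹' C ∩ {ω | s ω = 1} = if (1 : ℝ) ∈ C then {ω | s ω = 1} else ∅ := by
    split_ifs with h
    · ext ω; simp only [Set.mem_inter_iff, Set.mem_preimage, Set.mem_setOf_eq]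
      constructor
      · exact fun hh => hh.2
      · intro hh; exact ⟨by rw [hh]; exact h, hh⟩
    · ext ω; simp only [Set.mem_inter_iff, Set.mem_preimage, Set.mem_setOf_eq,
        Set.mem_empty_iff_false, iff_false, not_and]
      intro hc he; rw [he] at hc; exact h hc
  rw [hsplit, hinter,
    measure_union (hdisj.mono Set.inter_subset_right Set.inter_subset_right)
      (hC.preimage hs |>.inter hA1), h00, h11]
  simp only [Measure.coe_add, Measure.coe_smul, Pi.add_apply, Pi.smul_apply,
    Measure.dirac_apply' _ hC, smul_eq_mul]
  by_cases hc0 : (0 : ℝ) ∈ C <;> by_cases hc1 : (1 : ℝ) ∈ C <;>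
    simp [hc0, hc1, h0, h1, Set.indicator, measure_empty]


lemma findim {Ω : Type*} [MeasureSpace Ω] [IsProbabilityMeasure (ℙ : Measure Ω)]
    (ε s : ℤ → Ω → ℝ) (hεmeas : ∀ t, Measurable (ε t)) (hsmeas : ∀ t, Measurable (s t))
    (hindep : iIndepFun
      (Sum.elim ε s) ℙ)
    (hεlaw : ∀ t, Measure.map (ε t) ℙ = Measure.map (ε 0) ℙ)
    (hslaw : ∀ t, Measure.map (s t) ℙ = Measure.map (s 0) ℙ)
    (I : Finset ℤ) (τ : I → ℤ) (hτ : Function.Injective τ) :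
    Measure.map (fun ω (i : I) => (s (τ i) ω, ε (τ i) ω)) ℙ
      = Measure.pi (fun _ : I =>
          (Measure.map (s 0) ℙ).prod (Measure.map (ε 0) ℙ)) := by
  classical
  haveI : IsProbabilityMeasure (Measure.map (s 0) ℙ) :=
    Measure.isProbabilityMeasure_map (hsmeas 0).aemeasurable
  haveI : IsProbabilityMeasure (Measure.map (ε 0) ℙ) :=
    Measure.isProbabilityMeasure_map (hεmeas 0).aemeasurable
  have hmeas_map : Measurable (fun ω (i : I) => (s (τ i) ω, ε (τ i) ω)) :=
    measurable_pi_lambda _ fun i => ((hsmeas _).prodMk (hεmeas _))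
  refine (Measure.pi_eq_generateFrom
    (C := fun _ => Set.image2 (· ×ˢ ·) {u : Set ℝ | MeasurableSet u}
      {v : Set ℝ | MeasurableSet v})
    (fun _ => generateFrom_prod) (fun _ => isPiSystem_prod)
    (fun _ => ⟨fun _ => Set.univ ×ˢ Set.univ,
      fun _ => Set.mem_image2_of_mem (by simp) (by simp),
      fun _ => by rw [Set.univ_prod_univ]; exact measure_lt_top _ _,
      by rw [Set.iUnion_const, Set.univ_prod_univ]⟩) ?_).symm
  intro sets hsets
  choose Cs hCs Ds hDs hCD using fun i => hsets i
  simp only [Set.mem_setOf_eq] at hCs hDs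
  have hsetsm : ∀ i, MeasurableSet (sets i) := fun i => by
    rw [← hCD i]; exact (hCs i).prod (hDs i)
  rw [Measure.map_apply hmeas_map (MeasurableSet.univ_pi hsetsm)]
  have hpre : (fun ω (i : I) => (s (τ i) ω, ε (τ i) ω)) ⁻¹' Set.univ.pi sets
      = ⋂ i : I, (s (τ i) ⁻¹' Cs i ∩ ε (τ i) ⁻¹' Ds i) := by
    ext ω
    simp only [Set.mem_preimage, Set.mem_univ_pi, Set.mem_iInter, Set.mem_inter_iff]
    refine forall_congr' fun i => ?_
    rw [← hCD i]
    simp [Set.mem_prod]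
  -- the finset of coordinates in `ℤ ⊕ ℤ` and the corresponding one-dimensional sets
  set S : Finset (ℤ ⊕ ℤ) :=
    Finset.univ.image (fun i : I => Sum.inl (τ i))
      ∪ Finset.univ.image (fun i : I => Sum.inr (τ i)) with hS
  set sets' : ℤ ⊕ ℤ → Set ℝ :=
    Sum.elim (fun t => ⋃ (i : I) (_ : τ i = t), Ds i)
      (fun t => ⋃ (i : I) (_ : τ i = t), Cs i) with hsets'
  have hU_D : ∀ i : I, (⋃ (i' : I) (_ : τ i' = τ i), Ds i') = Ds i := by
    intro i; ext x
    simp only [Set.mem_iUnion]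
    constructor
    · rintro ⟨i', hi', hx⟩; exact hτ hi' ▸ hx
    · exact fun hx => ⟨i, rfl, hx⟩
  have hU_C : ∀ i : I, (⋃ (i' : I) (_ : τ i' = τ i), Cs i') = Cs i := by
    intro i; ext x
    simp only [Set.mem_iUnion]
    constructor
    · rintro ⟨i', hi', hx⟩; exact hτ hi' ▸ hx
    · exact fun hx => ⟨i, rfl, hx⟩
  have hmeasS : ∀ j ∈ S, MeasurableSet (sets' j) := by
    intro j _
    rcases j with t | t
    · exact MeasurableSet.iUnion fun i => MeasurableSet.iUnion fun _ => hDs i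
    · exact MeasurableSet.iUnion fun i => MeasurableSet.iUnion fun _ => hCs i
  have hkey := hindep.measure_inter_preimage_eq_mul S hmeasS
  have hSinter : ⋂ j ∈ S, Sum.elim ε s j ⁻¹' sets' j
      = ⋂ i : I, (s (τ i) ⁻¹' Cs i ∩ ε (τ i) ⁻¹' Ds i) := by
    ext ω
    simp only [Set.mem_iInter, Set.mem_inter_iff, Set.mem_preimage, hS, Finset.mem_union,
      Finset.mem_image, Finset.mem_univ, true_and]
    constructor
    · intro h i
      have h1 := h (Sum.inr (τ i)) (Or.inr ⟨i, rfl⟩)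
      have h2 := h (Sum.inl (τ i)) (Or.inl ⟨i, rfl⟩)
      rw [show sets' (Sum.inr (τ i)) = Cs i from hU_C i] at h1
      rw [show sets' (Sum.inl (τ i)) = Ds i from hU_D i] at h2
      exact ⟨h1, h2⟩
    · rintro h j (⟨i, rfl⟩ | ⟨i, rfl⟩)
      · rw [show sets' (Sum.inl (τ i)) = Ds i from hU_D i]
        exact (h i).2
      · rw [show sets' (Sum.inr (τ i)) = Cs i from hU_C i]
        exact (h i).1
  have hinjl : Set.InjOn (fun i : I => (Sum.inl (τ i) : ℤ ⊕ ℤ)) ↑(Finset.univ : Finset I) := by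
    intro a _ b _ hab
    exact hτ (Sum.inl_injective hab)
  have hinjr : Set.InjOn (fun i : I => (Sum.inr (τ i) : ℤ ⊕ ℤ)) ↑(Finset.univ : Finset I) := by
    intro a _ b _ hab
    exact hτ (Sum.inr_injective hab)
  have hdisjS : Disjoint (Finset.univ.image (fun i : I => Sum.inl (τ i)))
      (Finset.univ.image (fun i : I => Sum.inr (τ i))) := by
    rw [Finset.disjoint_left]
    rintro j hj hj'
    simp only [Finset.mem_image, Finset.mem_univ, true_and] at hj hj'
    obtain ⟨a, ha⟩ := hj
    obtain ⟨b, hb⟩ := hj'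
    rw [← ha] at hb
    exact Sum.inl_ne_inr hb.symm
  rw [hSinter] at hkey
  rw [hpre, hkey, hS, Finset.prod_union hdisjS, Finset.prod_image hinjl,
    Finset.prod_image hinjr]
  have hfl : ∀ i : I, ℙ (Sum.elim ε s (Sum.inl (τ i)) ⁻¹' sets' (Sum.inl (τ i)))
      = Measure.map (ε 0) ℙ (Ds i) := by
    intro i
    rw [show sets' (Sum.inl (τ i)) = Ds i from hU_D i]
    show ℙ (ε (τ i) ⁻¹' Ds i) = _
    rw [← Measure.map_apply (hεmeas _) (hDs i), hεlaw]
  have hfr : ∀ i : I, ℙ (Sum.elim ε s (Sum.inr (τ i)) ⁻¹' sets' (Sum.inr (τ i)))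
      = Measure.map (s 0) ℙ (Cs i) := by
    intro i
    rw [show sets' (Sum.inr (τ i)) = Cs i from hU_C i]
    show ℙ (s (τ i) ⁻¹' Cs i) = _
    rw [← Measure.map_apply (hsmeas _) (hCs i), hslaw]
  rw [Finset.prod_congr rfl fun i _ => hfl i, Finset.prod_congr rfl fun i _ => hfr i,
    ← Finset.prod_mul_distrib]
  refine Finset.prod_congr rfl fun i _ => ?_
  rw [← hCD i, Measure.prod_prod, mul_comm]

end SNAR

/-- **Existence part of Theorem 1**: under i.i.d. innovations `ε` with
`E[log⁺|ε|] < ∞` and an a.e. positive density, and an independent i.i.d.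
Bernoulli(p) family `s` with `p ∈ [0,1)`, the SNAR(1) equation
`y_t = s_t φ |y_{t−1}| + ε_t` admits a nonanticipative strictly stationary solution. -/
theorem snar_exists_stationary_solution
    {Ω : Type*} [MeasureSpace Ω] [IsProbabilityMeasure (ℙ : Measure Ω)]
    (ε : ℤ → Ω → ℝ) (s : ℤ → Ω → ℝ)
    (hεmeas : ∀ t, Measurable (ε t)) (hsmeas : ∀ t, Measurable (s t))
    -- the two families are (mutually and internally) independent
    (hindep : iIndepFun
      (Sum.elim ε s) ℙ)
    -- identically distributed innovations and Bernoulli states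
    (hεident : ∀ t, IdentDistrib (ε t) (ε 0) ℙ ℙ)
    (p : ℝ) (hp : p ∈ Set.Ico (0 : ℝ) 1)
    (hs1 : ∀ t, ℙ {ω | s t ω = 1} = ENNReal.ofReal p)
    (hs0 : ∀ t, ℙ {ω | s t ω = 0} = ENNReal.ofReal (1 - p))
    -- E[log⁺ |ε₁|] < ∞
    (hlog : Integrable (fun ω => max (Real.log |ε 1 ω|) 0) ℙ)
    -- ε₁ has an a.e. positive density on ℝ
    (f : ℝ → ℝ) (hfmeas : Measurable f)
    (hdensity : Measure.map (ε 1) ℙ = volume.withDensity (fun x => ENNReal.ofReal (f x)))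
    (hfpos : ∀ᵐ x ∂(volume : Measure ℝ), 0 < f x)
    (φ : ℝ) :
    ∃ y : ℤ → Ω → ℝ,
      -- (i) the SNAR(1) recursion holds almost surely at every time
      (∀ t : ℤ, ∀ᵐ ω ∂ℙ, y t ω = s t ω * φ * |y (t - 1) ω| + ε t ω) ∧
      -- (ii) nonanticipative: `y t` is measurable w.r.t. σ((s_j, ε_j) : j ≤ t)
      (∀ t : ℤ,
        Measurable[⨆ j ∈ Set.Iic t,
          MeasurableSpace.comap (fun ω => (s j ω, ε j ω)) inferInstance] (y t)) ∧
      -- (iii) strict stationarity: the shifted path has the same law as the path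
      Measure.map (fun ω => fun t : ℤ => y (t + 1) ω) ℙ
        = Measure.map (fun ω => fun t : ℤ => y t ω) ℙ := by
  classical
  have hεlaw : ∀ t, Measure.map (ε t) ℙ = Measure.map (ε 0) ℙ := fun t => (hεident t).map_eq
  have hslaw : ∀ t, Measure.map (s t) ℙ = Measure.map (s 0) ℙ := fun t => by
    rw [SNAR.bern_map_eq (hsmeas t) hp.1 hp.2.le (hs1 t) (hs0 t),
      SNAR.bern_map_eq (hsmeas 0) hp.1 hp.2.le (hs1 0) (hs0 0)]
  -- probability that `s` is nonzero
  have hsne : ∀ u : ℤ, ℙ (s u ⁻¹' ({0}ᶜ : Set ℝ)) = ENNReal.ofReal p := by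
    intro u
    rw [show s u ⁻¹' ({0}ᶜ : Set ℝ) = (s u ⁻¹' {0})ᶜ from rfl,
      measure_compl (hsmeas u (measurableSet_singleton 0)) (measure_ne_top _ _),
      show s u ⁻¹' ({0} : Set ℝ) = {ω | s u ω = 0} from rfl, hs0 u]
    exact ENNReal.sub_eq_of_eq_add ENNReal.ofReal_ne_top
      (by rw [← ENNReal.ofReal_add hp.1 (by linarith [hp.2.le])]; norm_num)
  -- almost surely there is a past time where `s` vanishes
  have hae : ∀ t : ℤ, ∀ᵐ ω ∂ℙ, ∃ k : ℕ, s (t - 1 - (k : ℤ)) ω = 0 := by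
    intro t
    rw [MeasureTheory.ae_iff]
    have hset : {ω | ¬ ∃ k : ℕ, s (t - 1 - (k : ℤ)) ω = 0}
        = ⋂ k : ℕ, s (t - 1 - (k : ℤ)) ⁻¹' ({0}ᶜ : Set ℝ) := by
      ext ω; simp [not_exists]
    rw [hset]
    have hbound : ∀ n : ℕ, ℙ (⋂ k : ℕ, s (t - 1 - (k : ℤ)) ⁻¹' ({0}ᶜ : Set ℝ))
        ≤ ENNReal.ofReal p ^ (n + 1) := by
      intro n
      have hsub : (⋂ k : ℕ, s (t - 1 - (k : ℤ)) ⁻¹' ({0}ᶜ : Set ℝ))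
          ⊆ ⋂ k ∈ Finset.range (n + 1), s (t - 1 - (k : ℤ)) ⁻¹' ({0}ᶜ : Set ℝ) := by
        intro ω hω
        simp only [Set.mem_iInter] at *
        exact fun k _ => hω k
      refine (measure_mono hsub).trans ?_
      have hiff : ⋂ j ∈ (Finset.range (n + 1)).image
            (fun k : ℕ => (Sum.inr (t - 1 - (k : ℤ)) : ℤ ⊕ ℤ)),
            Sum.elim ε s j ⁻¹' ({0}ᶜ : Set ℝ)
          = ⋂ k ∈ Finset.range (n + 1), s (t - 1 - (k : ℤ)) ⁻¹' ({0}ᶜ : Set ℝ) := by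
        ext ω
        simp only [Set.mem_iInter, Finset.mem_image, Finset.mem_range]
        constructor
        · intro h k hk
          exact h (Sum.inr (t - 1 - (k : ℤ))) ⟨k, hk, rfl⟩
        · rintro h j ⟨k, hk, rfl⟩
          exact h k hk
      have heq := hindep.measure_inter_preimage_eq_mul
        ((Finset.range (n + 1)).image (fun k : ℕ => (Sum.inr (t - 1 - (k : ℤ)) : ℤ ⊕ ℤ)))
        (sets := fun _ => ({0}ᶜ : Set ℝ)) (fun j _ => (measurableSet_singleton 0).compl)
      rw [hiff] at heq
      refine le_of_eq ?_
      rw [heq, Finset.prod_image (fun a _ b _ hab => by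
        simp only [Sum.inr.injEq] at hab; omega)]
      have hterm : ∀ k ∈ Finset.range (n + 1),
          ℙ (Sum.elim ε s (Sum.inr (t - 1 - (k : ℤ))) ⁻¹' ({0}ᶜ : Set ℝ))
            = ENNReal.ofReal p := fun k _ => hsne _
      exact (Finset.prod_congr rfl hterm).trans
        (by rw [Finset.prod_const, Finset.card_range])
    have hlt : ENNReal.ofReal p < 1 := ENNReal.ofReal_lt_one.2 hp.2
    have htend : Filter.Tendsto (fun n : ℕ => ENNReal.ofReal p ^ (n + 1))
        Filter.atTop (nhds 0) :=
      (ENNReal.tendsto_pow_atTop_nhds_zero_of_lt_one hlt).comp (Filter.tendsto_add_atTop_nat 1)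
    exact le_antisymm (ge_of_tendsto' htend hbound) zero_le
  refine ⟨fun t ω => SNAR.G φ
    (fun j => if j ≤ 0 then (s (t + j) ω, ε (t + j) ω) else ((0, 0) : ℝ × ℝ)), ?_, ?_, ?_⟩
  · -- (i) the recursion holds a.s.
    intro t
    filter_upwards [hae t] with ω hk
    obtain ⟨k, hk⟩ := hk
    set x : ℤ → ℝ × ℝ :=
      fun j => if j ≤ 0 then (s (t + j) ω, ε (t + j) ω) else ((0, 0) : ℝ × ℝ) with hxdef
    have hx : ∃ k : ℕ, (x (-1 - (k : ℤ))).1 = 0 := by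
      refine ⟨k, ?_⟩
      rw [hxdef]
      simp only
      rw [if_pos (by omega : -1 - (k : ℤ) ≤ 0)]
      show s (t + (-1 - (k : ℤ))) ω = 0
      rw [show t + (-1 - (k : ℤ)) = t - 1 - (k : ℤ) by ring]
      exact hk
    have hrec := SNAR.G_rec φ hx
    have h0 : x 0 = (s t ω, ε t ω) := by
      rw [hxdef]; simp
    have hcong : SNAR.G φ (fun j => x (j - 1))
        = SNAR.G φ (fun j => if j ≤ 0 then (s (t - 1 + j) ω, ε (t - 1 + j) ω)
            else ((0, 0) : ℝ × ℝ)) := by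
      apply SNAR.G_congr
      intro j hj
      show x (j - 1) = _
      rw [hxdef]
      simp only
      rw [if_pos (by omega : j - 1 ≤ 0), if_pos hj,
        show t + (j - 1) = t - 1 + j by ring]
    show SNAR.G φ x = _
    rw [hrec, h0, hcong]
  · -- (ii) nonanticipativity
    intro t
    set mt : MeasurableSpace Ω := ⨆ j ∈ Set.Iic t,
        MeasurableSpace.comap (fun ω => (s j ω, ε j ω)) inferInstance with hmt
    have hu : Measurable[mt]
        (fun ω => fun j : ℤ =>
          if j ≤ 0 then (s (t + j) ω, ε (t + j) ω) else ((0, 0) : ℝ × ℝ)) := by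
      refine @measurable_pi_lambda Ω ℤ (fun _ => ℝ × ℝ) mt _ _ ?_
      intro j
      by_cases hj : j ≤ 0
      · simp only [if_pos hj]
        refine Measurable.of_comap_le ?_
        rw [hmt]
        exact le_biSup (fun j => MeasurableSpace.comap
            (fun ω => (s j ω, ε j ω)) inferInstance)
          (show t + j ∈ Set.Iic t by simp [Set.mem_Iic]; omega)
      · simp only [if_neg hj]
        exact measurable_const
    exact (SNAR.measurable_G φ).comp hu
  · -- (iii) strict stationarity
    have hzmeas : Measurable (fun ω => fun j : ℤ => (s j ω, ε j ω)) :=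
      measurable_pi_lambda _ fun j => (hsmeas j).prodMk (hεmeas j)
    have hshiftmeas : Measurable (fun (x : ℤ → ℝ × ℝ) => fun j : ℤ => x (j + 1)) :=
      measurable_pi_lambda _ fun j => measurable_pi_apply (j + 1)
    have hHmeas : Measurable (fun (x : ℤ → ℝ × ℝ) => fun t : ℤ =>
        SNAR.G φ (fun j => if j ≤ 0 then x (t + j) else ((0, 0) : ℝ × ℝ))) := by
      apply measurable_pi_lambda
      intro t
      apply (SNAR.measurable_G φ).comp
      apply measurable_pi_lambda
      intro j
      by_cases hj : j ≤ 0
      · simp only [if_pos hj]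
        exact measurable_pi_apply (t + j)
      · simp only [if_neg hj]
        exact measurable_const
    haveI h1 : IsProbabilityMeasure (Measure.map (fun ω => fun j : ℤ => (s j ω, ε j ω)) ℙ) :=
      Measure.isProbabilityMeasure_map hzmeas.aemeasurable
    haveI h2 : IsProbabilityMeasure
        ((Measure.map (fun ω => fun j : ℤ => (s j ω, ε j ω)) ℙ).map
          (fun (x : ℤ → ℝ × ℝ) => fun j : ℤ => x (j + 1))) :=
      Measure.isProbabilityMeasure_map hshiftmeas.aemeasurable
    have hkey : (Measure.map (fun ω => fun j : ℤ => (s j ω, ε j ω)) ℙ).map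
          (fun (x : ℤ → ℝ × ℝ) => fun j : ℤ => x (j + 1))
        = Measure.map (fun ω => fun j : ℤ => (s j ω, ε j ω)) ℙ := by
      refine MeasureTheory.ext_of_generate_finite
        (measurableCylinders (fun _ : ℤ => ℝ × ℝ))
        generateFrom_measurableCylinders.symm isPiSystem_measurableCylinders ?_ (by simp)
      intro S hS
      obtain ⟨I, A, hA, rfl⟩ := (mem_measurableCylinders _).mp hS
      rw [Measure.map_apply hshiftmeas hA.cylinder,
        Measure.map_apply hzmeas (hshiftmeas hA.cylinder),
        Measure.map_apply hzmeas hA.cylinder]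
      have e1 : (fun ω => fun j : ℤ => (s j ω, ε j ω)) ⁻¹'
            ((fun (x : ℤ → ℝ × ℝ) => fun j : ℤ => x (j + 1)) ⁻¹' cylinder I A)
          = (fun ω => fun i : I => (s ((i : ℤ) + 1) ω, ε ((i : ℤ) + 1) ω)) ⁻¹' A := rfl
      have e2 : (fun ω => fun j : ℤ => (s j ω, ε j ω)) ⁻¹' cylinder I A
          = (fun ω => fun i : I => (s (i : ℤ) ω, ε (i : ℤ) ω)) ⁻¹' A := rfl
      have hm1 : Measurable (fun ω => fun i : I => (s ((i : ℤ) + 1) ω, ε ((i : ℤ) + 1) ω)) :=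
        measurable_pi_lambda _ fun i => ((hsmeas _).prodMk (hεmeas _))
      have hm2 : Measurable (fun ω => fun i : I => (s (i : ℤ) ω, ε (i : ℤ) ω)) :=
        measurable_pi_lambda _ fun i => ((hsmeas _).prodMk (hεmeas _))
      rw [e1, e2, ← Measure.map_apply hm1 hA, ← Measure.map_apply hm2 hA,
        SNAR.findim ε s hεmeas hsmeas hindep hεlaw hslaw I (fun i => (i : ℤ) + 1)
          (fun a b hab => Subtype.ext (add_right_cancel hab)),
        SNAR.findim ε s hεmeas hsmeas hindep hεlaw hslaw I (fun i => (i : ℤ))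
          (fun a b hab => Subtype.ext hab)]
    have hy1 : (fun ω => fun t : ℤ => SNAR.G φ
          (fun j => if j ≤ 0 then (s (t + 1 + j) ω, ε (t + 1 + j) ω) else ((0, 0) : ℝ × ℝ)))
        = (fun (x : ℤ → ℝ × ℝ) => fun t : ℤ =>
            SNAR.G φ (fun j => if j ≤ 0 then x (t + j) else ((0, 0) : ℝ × ℝ)))
          ∘ ((fun (x : ℤ → ℝ × ℝ) => fun j : ℤ => x (j + 1))
          ∘ (fun ω => fun j : ℤ => (s j ω, ε j ω))) := by
      funext ω
      funext t
      simp only [Function.comp_apply]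
      congr 1
      funext j
      by_cases hj : j ≤ 0
      · simp only [if_pos hj]
        rw [show t + 1 + j = t + j + 1 by ring]
      · simp only [if_neg hj]
    have hy0 : (fun ω => fun t : ℤ => SNAR.G φ
          (fun j => if j ≤ 0 then (s (t + j) ω, ε (t + j) ω) else ((0, 0) : ℝ × ℝ)))
        = (fun (x : ℤ → ℝ × ℝ) => fun t : ℤ =>
            SNAR.G φ (fun j => if j ≤ 0 then x (t + j) else ((0, 0) : ℝ × ℝ)))
          ∘ (fun ω => fun j : ℤ => (s j ω, ε j ω)) := rfl
    show Measure.map _ ℙ = Measure.map _ ℙ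
    rw [hy1, hy0]
    rw [show ((fun (x : ℤ → ℝ × ℝ) => fun t : ℤ =>
        SNAR.G φ (fun j => if j ≤ 0 then x (t + j) else ((0, 0) : ℝ × ℝ)))
          ∘ ((fun (x : ℤ → ℝ × ℝ) => fun j : ℤ => x (j + 1))
          ∘ (fun ω => fun j : ℤ => (s j ω, ε j ω))))
        = ((fun (x : ℤ → ℝ × ℝ) => fun t : ℤ =>
            SNAR.G φ (fun j => if j ≤ 0 then x (t + j) else ((0, 0) : ℝ × ℝ)))
          ∘ (fun (x : ℤ → ℝ × ℝ) => fun j : ℤ => x (j + 1)))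
          ∘ (fun ω => fun j : ℤ => (s j ω, ε j ω)) from rfl]
    rw [← Measure.map_map (hHmeas.comp hshiftmeas) hzmeas,
      ← Measure.map_map hHmeas hshiftmeas, hkey, Measure.map_map hHmeas hzmeas]
end

section
/- Let (Ω, F, P) be a probability space carrying an i.i.d. family (s_t)_{t∈ℤ} of Bernoulli(p) random variables with p ∈ [0,1), arbitrary real random variables (ε_t)_{t∈ℤ}, and φ ∈ ℝ. If (y_t)_{t∈ℤ} and (y'_t)_{t∈ℤ} are two processes of real random variables such that, almost surely, y_t = s_t φ |y_{t−1}| + ε_t and y'_t = s_t φ |y'_{t−1}| + ε_t hold simultaneously for all t ∈ ℤ, then almost surely y_t = y'_t for all t ∈ ℤ. (This is the uniqueness part of Theorem 1: since p < 1, almost surely every time t is preceded by some time j ≤ t with s_j = 0, at which both solutions equal ε_j, and the forward recursion then forces them to coincide.) -/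
open MeasureTheory ProbabilityTheory

/-- **Uniqueness part of Theorem 1**: if `(s_t)` is an i.i.d. Bernoulli(p) family with
`p ∈ [0,1)`, then any two processes satisfying the SNAR(1) recursion
`y_t = s_t φ |y_{t−1}| + ε_t` (for all `t ∈ ℤ`, almost surely, with the same `s` and `ε`)
coincide almost surely. -/
theorem snar_unique_solution
    {Ω : Type*} [MeasureSpace Ω] [IsProbabilityMeasure (ℙ : Measure Ω)]
    (s : ℤ → Ω → ℝ) (hsmeas : ∀ t, Measurable (s t))
    (hsindep : iIndepFun s ℙ)
    (p : ℝ) (hp : p ∈ Set.Ico (0 : ℝ) 1)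
    (hs1 : ∀ t, ℙ {ω | s t ω = 1} = ENNReal.ofReal p)
    (hs0 : ∀ t, ℙ {ω | s t ω = 0} = ENNReal.ofReal (1 - p))
    (ε : ℤ → Ω → ℝ) (φ : ℝ)
    (y y' : ℤ → Ω → ℝ)
    (hy : ∀ᵐ ω ∂ℙ, ∀ t : ℤ,
      y t ω = s t ω * φ * |y (t - 1) ω| + ε t ω ∧
      y' t ω = s t ω * φ * |y' (t - 1) ω| + ε t ω) :
    ∀ᵐ ω ∂ℙ, ∀ t : ℤ, y t ω = y' t ω := by
  obtain ⟨hp0, hp1⟩ := hp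
  -- the "bad" event where s j is neither 0 nor 1 is null
  have hbad : ∀ j : ℤ, ℙ {ω | s j ω ≠ 0 ∧ s j ω ≠ 1} = 0 := by
    intro j
    have hmeas01 : MeasurableSet (s j ⁻¹' {0, 1} : Set Ω) :=
      (hsmeas j) (by measurability)
    have hunion : ℙ (s j ⁻¹' {0, 1} : Set Ω) = 1 := by
      have : (s j ⁻¹' {0, 1} : Set Ω) = {ω | s j ω = 0} ∪ {ω | s j ω = 1} := by
        ext ω; simp [Set.mem_preimage]
      have hm1 : MeasurableSet {ω | s j ω = 1} := (hsmeas j) (measurableSet_singleton 1)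
      have hdisj : Disjoint {ω | s j ω = 0} {ω | s j ω = 1} := by
        rw [Set.disjoint_left]
        intro x h0 h1
        simp only [Set.mem_setOf_eq] at h0 h1
        rw [h0] at h1; norm_num at h1
      rw [this, measure_union hdisj hm1, hs0 j, hs1 j,
        ← ENNReal.ofReal_add (by linarith) hp0]
      norm_num
    have : ℙ (s j ⁻¹' {0, 1} : Set Ω)ᶜ = 0 := by
      rw [measure_compl hmeas01 (measure_ne_top _ _), hunion]; simp
    convert this using 2
    ext ω; simp [Set.mem_preimage]
  -- for each t, a.s. there is some j ≤ t with s j ω = 0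
  have hA : ∀ t : ℤ, ℙ {ω | ∀ j ≤ t, s j ω ≠ 0} = 0 := by
    intro t
    have key : ∀ n : ℕ, ℙ {ω | ∀ j ≤ t, s j ω ≠ 0} ≤ (ENNReal.ofReal p) ^ (n + 1) := by
      intro n
      have hprod : ℙ (⋂ j ∈ Finset.Icc (t - (n : ℤ)) t, s j ⁻¹' {1}) =
          (ENNReal.ofReal p) ^ (n + 1) := by
        rw [hsindep.meas_biInter (fun i _ => ⟨{1}, measurableSet_singleton 1, rfl⟩)]
        have heach : ∀ j ∈ Finset.Icc (t - (n : ℤ)) t,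
            ℙ (s j ⁻¹' {1} : Set Ω) = ENNReal.ofReal p := by
          intro j _
          have : (s j ⁻¹' {1} : Set Ω) = {ω | s j ω = 1} := rfl
          rw [this, hs1 j]
        rw [Finset.prod_congr rfl heach, Finset.prod_const]
        congr 1
        rw [Int.card_Icc]
        omega
      calc ℙ {ω | ∀ j ≤ t, s j ω ≠ 0}
          ≤ ℙ ((⋂ j ∈ Finset.Icc (t - (n : ℤ)) t, s j ⁻¹' {1}) ∪
              ⋃ j ∈ Finset.Icc (t - (n : ℤ)) t, {ω | s j ω ≠ 0 ∧ s j ω ≠ 1}) := by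
            apply measure_mono
            intro ω hω
            by_cases hall : ∀ j ∈ Finset.Icc (t - (n : ℤ)) t, s j ω = 1
            · left
              exact Set.mem_biInter fun j hj => hall j hj
            · right
              push_neg at hall
              obtain ⟨j, hj, hj1⟩ := hall
              refine Set.mem_biUnion hj ⟨?_, hj1⟩
              exact hω j (Finset.mem_Icc.mp hj).2
        _ ≤ ℙ (⋂ j ∈ Finset.Icc (t - (n : ℤ)) t, s j ⁻¹' {1}) +
              ℙ (⋃ j ∈ Finset.Icc (t - (n : ℤ)) t, {ω | s j ω ≠ 0 ∧ s j ω ≠ 1}) :=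
            measure_union_le _ _
        _ ≤ (ENNReal.ofReal p) ^ (n + 1) + 0 := by
            refine add_le_add hprod.le ?_
            refine le_of_eq (measure_biUnion_null_iff ?_ |>.mpr fun j _ => hbad j)
            exact (Finset.Icc _ _).countable_toSet
        _ = (ENNReal.ofReal p) ^ (n + 1) := by rw [add_zero]
    have htend : Filter.Tendsto (fun n : ℕ => (ENNReal.ofReal p) ^ (n + 1))
        Filter.atTop (nhds 0) := by
      have hlt : ENNReal.ofReal p < 1 := by
        rw [← ENNReal.ofReal_one]
        exact ENNReal.ofReal_lt_ofReal_iff_of_nonneg hp0 |>.mpr hp1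
      exact (ENNReal.tendsto_pow_atTop_nhds_zero_of_lt_one hlt).comp
        (Filter.tendsto_add_atTop_nat 1)
    exact le_antisymm (ge_of_tendsto' htend key) zero_le
  -- combine the a.s. events
  have hAae : ∀ᵐ ω ∂ℙ, ∀ t : ℤ, ∃ j ≤ t, s j ω = 0 := by
    rw [ae_all_iff]
    intro t
    rw [ae_iff]
    convert hA t using 2
    ext ω
    simp only [Set.mem_setOf_eq]
    push_neg
    rfl
  filter_upwards [hy, hAae] with ω h1 h2
  intro t
  obtain ⟨j, hj, hsj⟩ := h2 t
  have base : y j ω = y' j ω := by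
    rw [(h1 j).1, (h1 j).2, hsj]
    ring
  have step : ∀ n : ℕ, y (j + n) ω = y' (j + n) ω := by
    intro n
    induction n with
    | zero => simpa using base
    | succ k ih =>
      have h1' := h1 (j + (k + 1 : ℕ))
      have heq : (j + (k + 1 : ℕ) : ℤ) - 1 = j + k := by push_cast; ring
      rw [h1'.1, h1'.2, heq, ih]
  have : t = j + ((t - j).toNat : ℤ) := by
    rw [Int.toNat_of_nonneg (by omega)]; ring
  rw [this]
  exact step (t - j).toNat
end

section
/- Let Y, s, ε be mutually independent real random variables, where s is Bernoulli(p) with p ∈ [0,1), ε satisfies E[ε]=0 and E[ε²]=σ² < ∞, and E[Y²] < ∞. Let φ ∈ ℝ satisfy pφ² < 1. If the random variable sφ|Y| + ε has the same distribution as Y, then E[Y²] = σ²/(1 − pφ²). (This is the stationary second-moment formula of Section 2.) -/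
open MeasureTheory ProbabilityTheory

/-- **Stationary second-moment formula** (Section 2): if `Y`, `s`, `ε` are mutually
independent, `s` is Bernoulli(p) with `p ∈ [0,1)`, `E[ε] = 0`, `E[ε²] = σ² < ∞`,
`E[Y²] < ∞`, `pφ² < 1`, and `sφ|Y| + ε` has the same distribution as `Y`, then
`E[Y²] = σ²/(1 − pφ²)`. -/
theorem snar_stationary_second_moment
    {Ω : Type*} [MeasureSpace Ω] [IsProbabilityMeasure (ℙ : Measure Ω)]
    (Y s ε : Ω → ℝ)
    (hY : Measurable Y) (hs : Measurable s) (hε : Measurable ε)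
    (hindep : iIndepFun ![Y, s, ε] ℙ)
    (p : ℝ) (hp : p ∈ Set.Ico (0 : ℝ) 1)
    (hs1 : ℙ {ω | s ω = 1} = ENNReal.ofReal p)
    (hs0 : ℙ {ω | s ω = 0} = ENNReal.ofReal (1 - p))
    (σ2 : ℝ) (hεint : Integrable ε ℙ) (hεmean : ∫ ω, ε ω ∂ℙ = 0)
    (hε2int : Integrable (fun ω => (ε ω) ^ 2) ℙ) (hεvar : ∫ ω, (ε ω) ^ 2 ∂ℙ = σ2)
    (hY2int : Integrable (fun ω => (Y ω) ^ 2) ℙ)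
    (φ : ℝ) (hφp : p * φ ^ 2 < 1)
    (hstat : Measure.map (fun ω => s ω * φ * |Y ω| + ε ω) ℙ = Measure.map Y ℙ) :
    ∫ ω, (Y ω) ^ 2 ∂ℙ = σ2 / (1 - p * φ ^ 2) := by
  obtain ⟨hp0, hp1⟩ := hp
  set A : Set Ω := s ⁻¹' {1} with hAdef
  have hA : MeasurableSet A := hs (measurableSet_singleton 1)
  have hB : MeasurableSet (s ⁻¹' {0}) := hs (measurableSet_singleton 0)
  have hA1 : ℙ A = ENNReal.ofReal p := hs1
  -- a.e., s takes values in {0, 1}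
  have hdisj : Disjoint A (s ⁻¹' {0}) := by
    refine Set.disjoint_left.mpr ?_
    intro ω h1 h0
    simp only [Set.mem_preimage, Set.mem_singleton_iff] at h1 h0
    rw [h1] at h0; norm_num at h0
  have hunion : ℙ (A ∪ s ⁻¹' {0}) = 1 := by
    rw [measure_union hdisj hB, hA1,
      show ℙ (s ⁻¹' {0}) = ENNReal.ofReal (1 - p) from hs0,
      ← ENNReal.ofReal_add hp0 (by linarith)]
    norm_num
  have hae : ∀ᵐ ω ∂ℙ, s ω = 1 ∨ s ω = 0 := by
    have hcompl : ℙ (A ∪ s ⁻¹' {0})ᶜ = 0 := by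
      rw [measure_compl (hA.union hB) (measure_ne_top _ _), hunion, measure_univ]
      exact tsub_self 1
    filter_upwards [measure_eq_zero_iff_ae_notMem.mp hcompl] with ω hω
    rw [Set.notMem_compl_iff] at hω
    rcases hω with h | h
    · exact Or.inl h
    · exact Or.inr h
  -- E[s^2] = p
  have hs2ae : (fun ω => (s ω) ^ 2) =ᵐ[ℙ] A.indicator (fun _ => (1 : ℝ)) := by
    filter_upwards [hae] with ω hω
    rcases hω with h | h <;>
      simp [Set.indicator_apply, hAdef, Set.mem_preimage, h]
  have hs2int : Integrable (fun ω => (s ω) ^ 2) ℙ :=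
    ((integrable_const (1 : ℝ)).indicator hA).congr hs2ae.symm
  have hs2val : ∫ ω, (s ω) ^ 2 ∂ℙ = p := by
    rw [integral_congr_ae hs2ae, integral_indicator_const _ hA, measureReal_def, hA1,
      ENNReal.toReal_ofReal hp0]
    simp
  -- Integrability of Y
  have hYint : Integrable Y ℙ := by
    refine Integrable.mono' ((integrable_const (1 : ℝ)).add hY2int)
      hY.aestronglyMeasurable (ae_of_all _ fun ω => ?_)
    simp only [Pi.add_apply, Real.norm_eq_abs]
    have h1 : |Y ω| ^ 2 = Y ω ^ 2 := sq_abs _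
    nlinarith [abs_nonneg (Y ω), sq_nonneg (|Y ω| - 1)]
  -- The shifted variable
  set g : Ω → ℝ := fun ω => s ω * φ * |Y ω| with hgdef
  have hgmeas : Measurable g := (hs.mul_const φ).mul hY.abs
  have hgbd : ∀ᵐ ω ∂ℙ, ‖g ω‖ ≤ |φ| * |Y ω| := by
    filter_upwards [hae] with ω hω
    rcases hω with h | h <;>
      simp [hgdef, h, abs_mul, abs_abs, mul_comm, mul_nonneg, abs_nonneg]
  have hgint : Integrable g ℙ :=
    Integrable.mono' (hYint.abs.const_mul |φ|) hgmeas.aestronglyMeasurable hgbd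
  have hg2int : Integrable (fun ω => g ω ^ 2) ℙ := by
    refine Integrable.mono' (hY2int.const_mul (φ ^ 2))
      (hgmeas.pow_const 2).aestronglyMeasurable ?_
    filter_upwards [hae] with ω hω
    rcases hω with h | h
    · simp only [hgdef, h, one_mul]
      rw [Real.norm_eq_abs, abs_pow, sq_abs, mul_pow, sq_abs]
    · simp only [hgdef, h, zero_mul]
      have h0 : (0 : ℝ) ^ 2 = 0 := by norm_num
      rw [Real.norm_eq_abs, abs_pow, sq_abs, h0]
      positivity
  -- Independence facts
  have hfmeas : ∀ i, Measurable (![Y, s, ε] i) := by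
    intro i; fin_cases i <;> simpa
  have hpair : IndepFun (fun ω => (s ω, Y ω)) ε ℙ := by
    have := hindep.indepFun_prodMk hfmeas 1 0 2 (by decide) (by decide)
    simpa using this
  have hgε : IndepFun g ε ℙ := by
    have hm : Measurable (fun q : ℝ × ℝ => q.1 * φ * |q.2|) := by fun_prop
    exact hpair.comp hm measurable_id
  have hsY : IndepFun s Y ℙ := by
    have := hindep.indepFun (i := 1) (j := 0) (by decide)
    simpa using this
  -- cross term is integrable with mean zero
  have hcrossint : Integrable (fun ω => g ω * ε ω) ℙ :=
    hgε.integrable_mul hgint hεint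
  have hcross : ∫ ω, g ω * ε ω ∂ℙ = 0 := by
    rw [(show ∫ ω, g ω * ε ω ∂ℙ = (∫ ω, g ω ∂ℙ) * ∫ ω, ε ω ∂ℙ from
      hgε.integral_mul_eq_mul_integral hgmeas.aestronglyMeasurable hε.aestronglyMeasurable), hεmean,
      mul_zero]
  -- E[g^2] = p * (φ^2 * E[Y^2])
  have hg2val : ∫ ω, g ω ^ 2 ∂ℙ = p * (φ ^ 2 * ∫ ω, (Y ω) ^ 2 ∂ℙ) := by
    have heq : ∀ ω, g ω ^ 2 = (s ω ^ 2) * (φ ^ 2 * Y ω ^ 2) := by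
      intro ω
      simp only [hgdef]
      rw [mul_pow, mul_pow, sq_abs]; ring
    have hind2 : IndepFun (fun ω => s ω ^ 2) (fun ω => φ ^ 2 * Y ω ^ 2) ℙ :=
      hsY.comp (measurable_id.pow_const 2)
        ((measurable_id.pow_const 2).const_mul (φ ^ 2))
    calc ∫ ω, g ω ^ 2 ∂ℙ = ∫ ω, (s ω ^ 2) * (φ ^ 2 * Y ω ^ 2) ∂ℙ := by
          simp_rw [heq]
      _ = (∫ ω, s ω ^ 2 ∂ℙ) * ∫ ω, φ ^ 2 * Y ω ^ 2 ∂ℙ :=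
          hind2.integral_mul_eq_mul_integral (hs.pow_const 2).aestronglyMeasurable
            ((hY.pow_const 2).const_mul (φ ^ 2)).aestronglyMeasurable
      _ = p * (φ ^ 2 * ∫ ω, (Y ω) ^ 2 ∂ℙ) := by
          rw [hs2val, integral_const_mul]
  -- the distributional equation
  have hXmeas : Measurable (fun ω => s ω * φ * |Y ω| + ε ω) := hgmeas.add hε
  have hsq : AEStronglyMeasurable (fun x : ℝ => x ^ 2) (Measure.map Y ℙ) :=
    (measurable_id.pow_const 2).aestronglyMeasurable
  have hmapeq : ∫ ω, (Y ω) ^ 2 ∂ℙ = ∫ ω, (g ω + ε ω) ^ 2 ∂ℙ := by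
    rw [← integral_map hY.aemeasurable hsq, ← hstat,
      integral_map hXmeas.aemeasurable]
    exact (measurable_id.pow_const 2).aestronglyMeasurable
  -- expand and conclude
  have hc2 : Integrable (fun ω => 2 * (g ω * ε ω)) ℙ := hcrossint.const_mul 2
  have hsum : Integrable (fun ω => g ω ^ 2 + 2 * (g ω * ε ω)) ℙ := hg2int.add hc2
  have hexp : ∫ ω, (g ω + ε ω) ^ 2 ∂ℙ
      = (∫ ω, g ω ^ 2 ∂ℙ) + (∫ ω, 2 * (g ω * ε ω) ∂ℙ) + ∫ ω, ε ω ^ 2 ∂ℙ := by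
    calc ∫ ω, (g ω + ε ω) ^ 2 ∂ℙ
        = ∫ ω, (g ω ^ 2 + 2 * (g ω * ε ω) + ε ω ^ 2) ∂ℙ := by
          congr 1; funext ω; ring
      _ = _ := by
          rw [integral_add hsum hε2int, integral_add hg2int hc2]
  have hcross2 : ∫ ω, 2 * (g ω * ε ω) ∂ℙ = 0 := by
    rw [integral_const_mul, hcross, mul_zero]
  have hkey : ∫ ω, (Y ω) ^ 2 ∂ℙ
      = p * (φ ^ 2 * ∫ ω, (Y ω) ^ 2 ∂ℙ) + σ2 := by
    have h := hmapeq
    rw [hexp, hg2val, hcross2, hεvar] at h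
    linarith
  have hne : (1 : ℝ) - p * φ ^ 2 ≠ 0 := by linarith
  field_simp
  linarith [hkey]
end

section
/- Let Y, s, ε be mutually independent real random variables, where s is Bernoulli(p) with p ∈ [0,1), ε satisfies E[ε]=0, E[ε²]=σ² ∈ (0,∞), E[ε³]=0, and E[ε⁴]=κ₄ < ∞, and E[Y⁴] < ∞. Let φ ∈ ℝ satisfy pφ⁴ < 1 (which also forces pφ² < 1). If sφ|Y| + ε has the same distribution as Y, then the kurtosis of Y satisfies E[Y⁴]/(E[Y²])² = {6pφ² + (κ₄/σ⁴)(1 − pφ²)}·(1 − pφ²)/(1 − pφ⁴). (This is the stationary kurtosis formula of Section 2, with kurtosis(ε) = κ₄/σ⁴.) -/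
open MeasureTheory ProbabilityTheory

/-- **Stationary kurtosis formula** (Section 2): if `Y`, `s`, `ε` are mutually independent,
`s` is Bernoulli(p) with `p ∈ [0,1)`, `E[ε]=0`, `E[ε²]=σ² ∈ (0,∞)`, `E[ε³]=0`,
`E[ε⁴]=κ₄ < ∞`, `E[Y⁴] < ∞`, `pφ⁴ < 1`, and `sφ|Y| + ε =_d Y`, then
`E[Y⁴]/(E[Y²])² = {6pφ² + (κ₄/σ⁴)(1 − pφ²)}·(1 − pφ²)/(1 − pφ⁴)`. -/
theorem snar_stationary_kurtosis
    {Ω : Type*} [MeasureSpace Ω] [IsProbabilityMeasure (ℙ : Measure Ω)]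
    (Y s ε : Ω → ℝ)
    (hY : Measurable Y) (hs : Measurable s) (hε : Measurable ε)
    (hindep : iIndepFun ![Y, s, ε] ℙ)
    (p : ℝ) (hp : p ∈ Set.Ico (0 : ℝ) 1)
    (hs1 : ℙ {ω | s ω = 1} = ENNReal.ofReal p)
    (hs0 : ℙ {ω | s ω = 0} = ENNReal.ofReal (1 - p))
    (σ2 κ4 : ℝ) (hσ2pos : 0 < σ2)
    (hεint : Integrable ε ℙ) (hεmean : ∫ ω, ε ω ∂ℙ = 0)
    (hε2int : Integrable (fun ω => (ε ω) ^ 2) ℙ) (hεvar : ∫ ω, (ε ω) ^ 2 ∂ℙ = σ2)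
    (hε3int : Integrable (fun ω => (ε ω) ^ 3) ℙ) (hεthird : ∫ ω, (ε ω) ^ 3 ∂ℙ = 0)
    (hε4int : Integrable (fun ω => (ε ω) ^ 4) ℙ) (hεfourth : ∫ ω, (ε ω) ^ 4 ∂ℙ = κ4)
    (hY4int : Integrable (fun ω => (Y ω) ^ 4) ℙ)
    (φ : ℝ) (hφp : p * φ ^ 4 < 1)
    (hstat : Measure.map (fun ω => s ω * φ * |Y ω| + ε ω) ℙ = Measure.map Y ℙ) :
    (∫ ω, (Y ω) ^ 4 ∂ℙ) / (∫ ω, (Y ω) ^ 2 ∂ℙ) ^ 2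
      = (6 * p * φ ^ 2 + (κ4 / σ2 ^ 2) * (1 - p * φ ^ 2)) * (1 - p * φ ^ 2)
          / (1 - p * φ ^ 4) := by
  obtain ⟨hp0, hp1⟩ := hp
  have hσ2ne : σ2 ≠ 0 := ne_of_gt hσ2pos
  -- p φ² < 1
  have hφp2 : p * φ ^ 2 < 1 := by
    nlinarith [mul_nonneg hp0 (sq_nonneg φ),
      mul_nonneg (mul_nonneg hp0 (sub_nonneg.2 hp1.le)) (sq_nonneg (φ ^ 2))]
  -- s is a.e. {0,1}-valued
  have h0m : MeasurableSet {ω | s ω = 0} := hs (measurableSet_singleton 0)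
  have h1m : MeasurableSet {ω | s ω = 1} := hs (measurableSet_singleton 1)
  have hs01 : ∀ᵐ ω ∂ℙ, s ω = 0 ∨ s ω = 1 := by
    have hd : Disjoint {ω | s ω = 0} {ω | s ω = 1} := by
      rw [Set.disjoint_left]
      rintro ω (h : s ω = 0) (h' : s ω = 1)
      rw [h] at h'; norm_num at h'
    have hu : ℙ ({ω | s ω = 0} ∪ {ω | s ω = 1}) = 1 := by
      rw [measure_union hd h1m, hs0, hs1, ← ENNReal.ofReal_add (by linarith) hp0]
      norm_num
    have hcompl : ℙ (({ω | s ω = 0} ∪ {ω | s ω = 1})ᶜ) = 0 := by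
      rw [measure_compl (h0m.union h1m) (measure_ne_top _ _), hu, measure_univ, tsub_self]
    rw [ae_iff]
    rw [show {ω | ¬(s ω = 0 ∨ s ω = 1)} = ({ω | s ω = 0} ∪ {ω | s ω = 1})ᶜ by
      ext ω; simp [not_or]]
    exact hcompl
  have hsint : Integrable s ℙ := by
    refine (integrable_const (1 : ℝ)).mono' hs.aestronglyMeasurable ?_
    filter_upwards [hs01] with ω h
    rcases h with h | h <;> simp [h]
  have hsmean : ∫ ω, s ω ∂ℙ = p := by
    have hcongr : s =ᵐ[ℙ] Set.indicator {ω | s ω = 1} (fun _ => (1 : ℝ)) := by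
      filter_upwards [hs01] with ω h
      rcases h with h | h <;> simp [Set.indicator_apply, Set.mem_setOf_eq, h]
    rw [integral_congr_ae hcongr, integral_indicator_const _ h1m, measureReal_def, hs1]
    simp [ENNReal.toReal_ofReal hp0]
  -- integrability of powers of Y
  have hY4mem : MemLp Y 4 ℙ := by
    have h := memLp_norm_rpow_iff (μ := (ℙ : Measure Ω)) (q := 4) (p := 4) hY.aestronglyMeasurable
      (by norm_num) (by norm_num)
    rw [ENNReal.div_self (by norm_num) (by norm_num), memLp_one_iff_integrable] at h
    apply h.mp
    refine hY4int.congr (ae_of_all _ fun ω => ?_)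
    show Y ω ^ 4 = ‖Y ω‖ ^ ((4 : ENNReal)).toReal
    rw [Real.norm_eq_abs, show ((4 : ENNReal)).toReal = ((4 : ℕ) : ℝ) by norm_num,
      Real.rpow_natCast, pow_abs, abs_of_nonneg (by positivity)]
  have hY2int : Integrable (fun ω => Y ω ^ 2) ℙ :=
    (hY4mem.mono_exponent (by norm_num)).integrable_sq
  have hYabsint : Integrable (fun ω => |Y ω|) ℙ :=
    (memLp_one_iff_integrable.mp (hY4mem.mono_exponent (by norm_num))).abs
  have hY3int : Integrable (fun ω => |Y ω| ^ 3) ℙ := by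
    have h3 : MemLp Y 3 ℙ := hY4mem.mono_exponent (by norm_num)
    refine (h3.integrable_norm_rpow (by norm_num) (by norm_num)).congr
      (ae_of_all _ fun ω => ?_)
    show ‖Y ω‖ ^ ((3 : ENNReal)).toReal = |Y ω| ^ 3
    rw [Real.norm_eq_abs, show ((3 : ENNReal)).toReal = ((3 : ℕ) : ℝ) by norm_num,
      Real.rpow_natCast]
  -- factorization of E[s * f(Y) * g(ε)]
  have key : ∀ (f g : ℝ → ℝ), Measurable f → Measurable g →
      Integrable (fun ω => f (Y ω)) ℙ → Integrable (fun ω => g (ε ω)) ℙ →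
      Integrable (fun ω => s ω * f (Y ω) * g (ε ω)) ℙ ∧
      ∫ ω, s ω * f (Y ω) * g (ε ω) ∂ℙ
        = p * (∫ ω, f (Y ω) ∂ℙ) * (∫ ω, g (ε ω) ∂ℙ) := by
    intro f g hf hg hfi hgi
    have hmeas : ∀ i, Measurable (![Y, s, ε] i) := by
      intro i; fin_cases i
      · exact hY
      · exact hs
      · exact hε
    have h1 : IndepFun s (fun ω => f (Y ω)) ℙ := by
      have h10 : IndepFun s Y ℙ := hindep.indepFun (show (1 : Fin 3) ≠ 0 by decide)
      exact h10.comp measurable_id hf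
    have hsf : Integrable (fun ω => s ω * f (Y ω)) ℙ := h1.integrable_mul hsint hfi
    have h2 : IndepFun (fun ω => s ω * f (Y ω)) (fun ω => g (ε ω)) ℙ := by
      have hp2 := hindep.indepFun_prodMk hmeas 1 0 2 (by decide) (by decide)
      exact hp2.comp (measurable_fst.mul (hf.comp measurable_snd)) hg
    have hint : Integrable (fun ω => s ω * f (Y ω) * g (ε ω)) ℙ :=
      h2.integrable_mul hsf hgi
    refine ⟨hint, ?_⟩
    rw [h2.integral_fun_mul_eq_mul_integral hsf.aestronglyMeasurable hgi.aestronglyMeasurable,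
      h1.integral_fun_mul_eq_mul_integral hsint.aestronglyMeasurable hfi.aestronglyMeasurable, hsmean]
  -- moment transfer through stationarity
  have hXmeas : Measurable (fun ω => s ω * φ * |Y ω| + ε ω) :=
    ((hs.mul_const φ).mul hY.abs).add hε
  have transfer : ∀ (k : ℕ), Integrable (fun ω => Y ω ^ k) ℙ →
      Integrable (fun ω => (s ω * φ * |Y ω| + ε ω) ^ k) ℙ ∧
      ∫ ω, (s ω * φ * |Y ω| + ε ω) ^ k ∂ℙ = ∫ ω, Y ω ^ k ∂ℙ := by
    intro k hk
    have hpk : Measurable (fun x : ℝ => x ^ k) := measurable_id.pow_const k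
    have hmap : Integrable (fun x : ℝ => x ^ k) (Measure.map Y ℙ) := by
      rw [integrable_map_measure hpk.aestronglyMeasurable hY.aemeasurable]
      exact hk
    constructor
    · have h : Integrable (fun x : ℝ => x ^ k)
          (Measure.map (fun ω => s ω * φ * |Y ω| + ε ω) ℙ) := by rw [hstat]; exact hmap
      rw [integrable_map_measure hpk.aestronglyMeasurable hXmeas.aemeasurable] at h
      exact h
    · calc ∫ ω, (s ω * φ * |Y ω| + ε ω) ^ k ∂ℙ
          = ∫ x, x ^ k ∂(Measure.map (fun ω => s ω * φ * |Y ω| + ε ω) ℙ) :=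
            (integral_map hXmeas.aemeasurable hpk.aestronglyMeasurable).symm
        _ = ∫ x, x ^ k ∂(Measure.map Y ℙ) := by rw [hstat]
        _ = ∫ ω, Y ω ^ k ∂ℙ := integral_map hY.aemeasurable hpk.aestronglyMeasurable
    -- second moment equation
  set m2 := ∫ ω, Y ω ^ 2 ∂ℙ with hm2def
  set m4 := ∫ ω, Y ω ^ 4 ∂ℙ with hm4def
  -- the five factorized terms
  obtain ⟨hT1i, hT1⟩ := key (fun y => φ ^ 4 * y ^ 4) (fun _ => (1 : ℝ))
    ((measurable_id.pow_const 4).const_mul _) measurable_const (hY4int.const_mul _)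
    (integrable_const _)
  obtain ⟨hT2i, hT2⟩ := key (fun y => 4 * φ ^ 3 * |y| ^ 3) (fun x => x)
    (((measurable_abs.pow_const 3).const_mul _)) measurable_id (hY3int.const_mul _) hεint
  obtain ⟨hT3i, hT3⟩ := key (fun y => 6 * φ ^ 2 * y ^ 2) (fun x => x ^ 2)
    ((measurable_id.pow_const 2).const_mul _) (measurable_id.pow_const 2)
    (hY2int.const_mul _) hε2int
  obtain ⟨hT4i, hT4⟩ := key (fun y => 4 * φ * |y|) (fun x => x ^ 3)
    (measurable_abs.const_mul _) (measurable_id.pow_const 3) (hYabsint.const_mul _) hε3int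
  obtain ⟨hU1i, hU1⟩ := key (fun y => φ ^ 2 * y ^ 2) (fun _ => (1 : ℝ))
    ((measurable_id.pow_const 2).const_mul _) measurable_const (hY2int.const_mul _)
    (integrable_const _)
  obtain ⟨hU2i, hU2⟩ := key (fun y => 2 * φ * |y|) (fun x => x)
    (measurable_abs.const_mul _) measurable_id (hYabsint.const_mul _) hεint
  beta_reduce at hT1i hT1 hT2i hT2 hT3i hT3 hT4i hT4 hU1i hU1 hU2i hU2
  -- powers of s collapse
  have hspow : ∀ᵐ ω ∂ℙ, s ω ^ 2 = s ω ∧ s ω ^ 3 = s ω ∧ s ω ^ 4 = s ω := by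
    filter_upwards [hs01] with ω h
    rcases h with h | h <;> simp [h]
  -- second moment equation
  have eq2 : m2 = p * φ ^ 2 * m2 + σ2 := by
    have hsplit : (fun ω => (s ω * φ * |Y ω| + ε ω) ^ 2) =ᵐ[ℙ]
        (fun ω => s ω * (φ ^ 2 * Y ω ^ 2) * (1 : ℝ)
          + (s ω * (2 * φ * |Y ω|) * ε ω + ε ω ^ 2)) := by
      filter_upwards [hspow] with ω ⟨h2, h3, h4⟩
      have habs : |Y ω| ^ 2 = Y ω ^ 2 := sq_abs _
      linear_combination (φ ^ 2 * |Y ω| ^ 2) * h2 + (φ ^ 2 * s ω) * habs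
    have h := (transfer 2 hY2int).2
    rw [integral_congr_ae hsplit] at h
    have A2 : ∫ ω, (s ω * (φ ^ 2 * Y ω ^ 2) * (1 : ℝ)
          + (s ω * (2 * φ * |Y ω|) * ε ω + ε ω ^ 2)) ∂ℙ
        = (∫ ω, s ω * (φ ^ 2 * Y ω ^ 2) * (1 : ℝ) ∂ℙ)
          + ∫ ω, (s ω * (2 * φ * |Y ω|) * ε ω + ε ω ^ 2) ∂ℙ :=
      integral_add hU1i (hU2i.add hε2int)
    have A1 : ∫ ω, (s ω * (2 * φ * |Y ω|) * ε ω + ε ω ^ 2) ∂ℙ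
        = (∫ ω, s ω * (2 * φ * |Y ω|) * ε ω ∂ℙ) + ∫ ω, ε ω ^ 2 ∂ℙ :=
      integral_add hU2i hε2int
    rw [A2, A1, hU1, hU2, hεvar, hεmean] at h
    have hconst : ∫ (_ : Ω), (1 : ℝ) ∂ℙ = 1 := by simp
    rw [hconst] at h
    have hc1 : ∫ ω, φ ^ 2 * Y ω ^ 2 ∂ℙ = φ ^ 2 * m2 := by
      rw [integral_const_mul, hm2def]
    rw [hc1, ← hm2def] at h
    linear_combination -h
  -- fourth moment equation
  have eq4 : m4 = p * φ ^ 4 * m4 + 6 * p * φ ^ 2 * m2 * σ2 + κ4 := by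
    have hsplit : (fun ω => (s ω * φ * |Y ω| + ε ω) ^ 4) =ᵐ[ℙ]
        (fun ω => s ω * (φ ^ 4 * Y ω ^ 4) * (1 : ℝ)
          + (s ω * (4 * φ ^ 3 * |Y ω| ^ 3) * ε ω
          + (s ω * (6 * φ ^ 2 * Y ω ^ 2) * ε ω ^ 2
          + (s ω * (4 * φ * |Y ω|) * ε ω ^ 3 + ε ω ^ 4)))) := by
      filter_upwards [hspow] with ω ⟨h2, h3, h4⟩
      have habs : |Y ω| ^ 2 = Y ω ^ 2 := sq_abs _
      have habs4 : |Y ω| ^ 4 = Y ω ^ 4 := by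
        rw [pow_abs, abs_of_nonneg (by positivity)]
      linear_combination (φ ^ 4 * |Y ω| ^ 4) * h4 + (φ ^ 4 * s ω) * habs4
        + (4 * φ ^ 3 * |Y ω| ^ 3 * ε ω) * h3
        + (6 * φ ^ 2 * ε ω ^ 2 * |Y ω| ^ 2) * h2 + (6 * φ ^ 2 * ε ω ^ 2 * s ω) * habs
    have h := (transfer 4 hY4int).2
    rw [integral_congr_ae hsplit] at h
    have B1 : ∫ ω, (s ω * (φ ^ 4 * Y ω ^ 4) * (1 : ℝ)
          + (s ω * (4 * φ ^ 3 * |Y ω| ^ 3) * ε ω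
          + (s ω * (6 * φ ^ 2 * Y ω ^ 2) * ε ω ^ 2
          + (s ω * (4 * φ * |Y ω|) * ε ω ^ 3 + ε ω ^ 4)))) ∂ℙ
        = (∫ ω, s ω * (φ ^ 4 * Y ω ^ 4) * (1 : ℝ) ∂ℙ)
          + ∫ ω, (s ω * (4 * φ ^ 3 * |Y ω| ^ 3) * ε ω
          + (s ω * (6 * φ ^ 2 * Y ω ^ 2) * ε ω ^ 2
          + (s ω * (4 * φ * |Y ω|) * ε ω ^ 3 + ε ω ^ 4))) ∂ℙ :=
      integral_add hT1i (hT2i.add (hT3i.add (hT4i.add hε4int)))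
    have B2 : ∫ ω, (s ω * (4 * φ ^ 3 * |Y ω| ^ 3) * ε ω
          + (s ω * (6 * φ ^ 2 * Y ω ^ 2) * ε ω ^ 2
          + (s ω * (4 * φ * |Y ω|) * ε ω ^ 3 + ε ω ^ 4))) ∂ℙ
        = (∫ ω, s ω * (4 * φ ^ 3 * |Y ω| ^ 3) * ε ω ∂ℙ)
          + ∫ ω, (s ω * (6 * φ ^ 2 * Y ω ^ 2) * ε ω ^ 2
          + (s ω * (4 * φ * |Y ω|) * ε ω ^ 3 + ε ω ^ 4)) ∂ℙ :=
      integral_add hT2i (hT3i.add (hT4i.add hε4int))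
    have B3 : ∫ ω, (s ω * (6 * φ ^ 2 * Y ω ^ 2) * ε ω ^ 2
          + (s ω * (4 * φ * |Y ω|) * ε ω ^ 3 + ε ω ^ 4)) ∂ℙ
        = (∫ ω, s ω * (6 * φ ^ 2 * Y ω ^ 2) * ε ω ^ 2 ∂ℙ)
          + ∫ ω, (s ω * (4 * φ * |Y ω|) * ε ω ^ 3 + ε ω ^ 4) ∂ℙ :=
      integral_add hT3i (hT4i.add hε4int)
    have B4 : ∫ ω, (s ω * (4 * φ * |Y ω|) * ε ω ^ 3 + ε ω ^ 4) ∂ℙ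
        = (∫ ω, s ω * (4 * φ * |Y ω|) * ε ω ^ 3 ∂ℙ) + ∫ ω, ε ω ^ 4 ∂ℙ :=
      integral_add hT4i hε4int
    rw [B1, B2, B3, B4, hT1, hT2, hT3, hT4, hεmean, hεvar, hεthird, hεfourth] at h
    have hconst : ∫ (_ : Ω), (1 : ℝ) ∂ℙ = 1 := by simp
    rw [hconst] at h
    have hc1 : ∫ ω, φ ^ 4 * Y ω ^ 4 ∂ℙ = φ ^ 4 * m4 := by
      rw [integral_const_mul, hm4def]
    have hc3 : ∫ ω, 6 * φ ^ 2 * Y ω ^ 2 ∂ℙ = 6 * φ ^ 2 * m2 := by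
      rw [integral_const_mul, hm2def]
    rw [hc1, hc3, ← hm4def] at h
    linear_combination -h
  -- solve the equations
  have h1a : (0 : ℝ) < 1 - p * φ ^ 2 := by linarith
  have h1b : (0 : ℝ) < 1 - p * φ ^ 4 := by linarith
  have hm2s : m2 * (1 - p * φ ^ 2) = σ2 := by linear_combination eq2
  have hm4s : m4 * (1 - p * φ ^ 4) = 6 * p * φ ^ 2 * m2 * σ2 + κ4 := by
    linear_combination eq4
  have hm2v : m2 = σ2 / (1 - p * φ ^ 2) := (eq_div_iff (ne_of_gt h1a)).mpr hm2s
  have hm4v : m4 = (6 * p * φ ^ 2 * m2 * σ2 + κ4) / (1 - p * φ ^ 4) :=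
    (eq_div_iff (ne_of_gt h1b)).mpr hm4s
  rw [hm4v, hm2v]
  field_simp
end

section
/- Let Y, s, ε be mutually independent real random variables, where s is Bernoulli(p) with p ∈ (0,1), ε has the Gaussian distribution N(0, σ²) with σ > 0, and E[Y⁴] < ∞. Let φ ≠ 0 satisfy 0 < pφ⁴ < 1. If sφ|Y| + ε has the same distribution as Y, then E[Y⁴]/(E[Y²])² = 3(1 − p²φ⁴)/(1 − pφ⁴), and this quantity is strictly greater than 3; in particular Y is heavier-tailed than Gaussian. -/
open MeasureTheory ProbabilityTheory

section SnarAux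

open Filter Real
open scoped NNReal ENNReal

lemma snar_tendsto_pow_mul_exp {b : ℝ} (hb : 0 < b) (n : ℕ) :
    Tendsto (fun x : ℝ => x ^ n * Real.exp (-b * x ^ 2)) (Filter.cocompact ℝ) (nhds 0) := by
  have h := tendsto_rpow_abs_mul_exp_neg_mul_sq_cocompact hb n
  refine squeeze_zero_norm (fun x => ?_) h
  rw [norm_mul, norm_pow, Real.norm_eq_abs, Real.norm_eq_abs,
    abs_of_pos (Real.exp_pos _), ← Real.rpow_natCast |x| n]

lemma snar_integrable_pow_mul_exp {b : ℝ} (hb : 0 < b) (n : ℕ) :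
    Integrable (fun x : ℝ => x ^ n * Real.exp (-b * x ^ 2)) := by
  have hcont : Continuous fun x : ℝ => x ^ n * Real.exp (-b * x ^ 2) := by
    continuity
  refine hcont.locallyIntegrable.integrable_of_isBigO_cocompact
    (g := fun x : ℝ => Real.exp (-(b/2) * x ^ 2)) ?_ ((integrable_exp_neg_mul_sq (by linarith)).integrableAtFilter _)
  have ht := tendsto_rpow_abs_mul_exp_neg_mul_sq_cocompact (show (0:ℝ) < b/2 by linarith) n
  have hev : ∀ᶠ x : ℝ in Filter.cocompact ℝ,
      ‖x ^ n * Real.exp (-b * x ^ 2)‖ ≤ 1 * ‖Real.exp (-(b/2) * x ^ 2)‖ := by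
    filter_upwards [ht.eventually (eventually_le_nhds (by norm_num : (0:ℝ) < 1))] with x hx
    have hnorm : ‖x ^ n * Real.exp (-(b/2) * x ^ 2)‖ = |x| ^ (n:ℝ) * Real.exp (-(b/2) * x ^ 2) := by
      rw [norm_mul, norm_pow, Real.norm_eq_abs, Real.norm_eq_abs,
        abs_of_pos (Real.exp_pos _), ← Real.rpow_natCast |x| n]
    have hsplit : x ^ n * Real.exp (-b * x ^ 2)
        = (x ^ n * Real.exp (-(b/2) * x ^ 2)) * Real.exp (-(b/2) * x ^ 2) := by
      rw [mul_assoc, ← Real.exp_add]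
      ring_nf
    rw [hsplit, norm_mul, one_mul, hnorm]
    have hexp : ‖Real.exp (-(b/2) * x ^ 2)‖ = Real.exp (-(b/2) * x ^ 2) :=
      Real.norm_eq_abs _ ▸ abs_of_pos (Real.exp_pos _)
    rw [hexp]
    nlinarith [Real.exp_pos (-(b/2) * x ^ 2)]
  exact Asymptotics.IsBigO.of_bound 1 hev

lemma snar_integral_odd_pow_mul_exp {b : ℝ} (n : ℕ) (hn : Odd n) :
    ∫ x : ℝ, x ^ n * Real.exp (-b * x ^ 2) = 0 := by
  have h := MeasureTheory.integral_neg_eq_self (fun x : ℝ => x ^ n * Real.exp (-b * x ^ 2)) volume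
  have h2 : (∫ x : ℝ, (-x) ^ n * Real.exp (-b * (-x) ^ 2))
      = ∫ x : ℝ, -(x ^ n * Real.exp (-b * x ^ 2)) := by
    congr 1; ext x
    rw [hn.neg_pow, neg_sq]; ring
  rw [h2, MeasureTheory.integral_neg] at h
  linarith

lemma snar_ibp {b : ℝ} (hb : 0 < b) (n : ℕ) :
    ∫ x : ℝ, x ^ (n + 2) * Real.exp (-b * x ^ 2)
      = ((n + 1 : ℝ) / (2 * b)) * ∫ x : ℝ, x ^ n * Real.exp (-b * x ^ 2) := by
  set f : ℝ → ℝ := fun x => x ^ (n + 1) * Real.exp (-b * x ^ 2) with hf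
  set f' : ℝ → ℝ := fun x =>
    (n + 1 : ℝ) * x ^ n * Real.exp (-b * x ^ 2) - 2 * b * (x ^ (n + 2) * Real.exp (-b * x ^ 2))
    with hf'
  have hderiv : ∀ x : ℝ, HasDerivAt f (f' x) x := by
    intro x
    have h1 : HasDerivAt (fun x : ℝ => x ^ (n + 1)) ((n + 1 : ℝ) * x ^ n) x := by
      simpa using hasDerivAt_pow (n + 1) x
    have h2 : HasDerivAt (fun x : ℝ => Real.exp (-b * x ^ 2)) (Real.exp (-b * x ^ 2) * (-b * (2 * x))) x := by
      have hinner : HasDerivAt (fun x : ℝ => -b * x ^ 2) (-b * (2 * x)) x := by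
        simpa using ((hasDerivAt_pow 2 x).const_mul (-b))
      exact (Real.hasDerivAt_exp _).comp x hinner
    have := h1.fun_mul h2
    refine this.congr_deriv ?_
    simp only [hf']
    ring
  have hint : Integrable f' := by
    apply Integrable.sub
    · exact ((snar_integrable_pow_mul_exp hb n).const_mul ((n:ℝ)+1)).congr
        (Filter.Eventually.of_forall fun x => by ring)
    · exact ((snar_integrable_pow_mul_exp hb (n + 2)).const_mul (2*b)).congr
        (Filter.Eventually.of_forall fun x => by rfl)
  have hbot : Tendsto f atBot (nhds 0) :=
    (snar_tendsto_pow_mul_exp hb (n + 1)).mono_left _root_.atBot_le_cocompact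
  have htop : Tendsto f atTop (nhds 0) :=
    (snar_tendsto_pow_mul_exp hb (n + 1)).mono_left _root_.atTop_le_cocompact
  have h0 : ∫ x : ℝ, f' x = 0 - 0 :=
    MeasureTheory.integral_of_hasDerivAt_of_tendsto hderiv hint hbot htop
  rw [sub_zero] at h0
  have hsplit : ∫ x : ℝ, f' x
      = (n + 1 : ℝ) * (∫ x : ℝ, x ^ n * Real.exp (-b * x ^ 2))
        - 2 * b * ∫ x : ℝ, x ^ (n + 2) * Real.exp (-b * x ^ 2) := by
    rw [hf']
    rw [MeasureTheory.integral_sub]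
    · congr 1
      · rw [← MeasureTheory.integral_const_mul]
        congr 1; ext x; ring
      · rw [MeasureTheory.integral_const_mul]
    · exact ((snar_integrable_pow_mul_exp hb n).const_mul ((n:ℝ)+1)).congr
        (Filter.Eventually.of_forall fun x => by ring)
    · exact (snar_integrable_pow_mul_exp hb (n + 2)).const_mul _
  rw [hsplit] at h0
  have h2b : (2 * b) ≠ 0 := by positivity
  rw [div_mul_eq_mul_div, eq_div_iff h2b]
  linarith

section Gauss
variable {v : ℝ≥0} (hv : v ≠ 0)

lemma snar_pdf_eq (x : ℝ) :
    gaussianPDFReal 0 v x = (√(2 * π * v))⁻¹ * Real.exp (-(2 * (v:ℝ))⁻¹ * x ^ 2) := by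
  rw [gaussianPDFReal]
  congr 1
  rw [sub_zero]
  congr 1
  rw [neg_div, neg_mul]
  congr 1
  rw [inv_mul_eq_div]

include hv

lemma snar_gauss_bridge (g : ℝ → ℝ) :
    ∫ x, g x ∂(gaussianReal 0 v) = ∫ x : ℝ, gaussianPDFReal 0 v x * g x := by
  rw [gaussianReal_of_var_ne_zero 0 hv]
  have h : (gaussianPDF 0 v) = fun x => ((gaussianPDFReal 0 v x).toNNReal : ℝ≥0∞) := by
    ext x; rw [gaussianPDF]; rfl
  rw [h, integral_withDensity_eq_integral_smul
    ((measurable_gaussianPDFReal 0 v).real_toNNReal) g]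
  congr 1
  ext x
  rw [NNReal.smul_def, smul_eq_mul, Real.coe_toNNReal _ (gaussianPDFReal_nonneg 0 v x)]

lemma snar_gauss_integrable_pow (n : ℕ) :
    Integrable (fun x : ℝ => x ^ n) (gaussianReal 0 v) := by
  have hvpos : (0:ℝ) < v := by positivity
  have hb : (0:ℝ) < (2 * (v:ℝ))⁻¹ := by positivity
  rw [gaussianReal_of_var_ne_zero 0 hv]
  have h : (gaussianPDF 0 v) = fun x => ((gaussianPDFReal 0 v x).toNNReal : ℝ≥0∞) := by
    ext x; rw [gaussianPDF]; rfl
  rw [h, integrable_withDensity_iff_integrable_smul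
    ((measurable_gaussianPDFReal 0 v).real_toNNReal)]
  have : (fun x : ℝ => (gaussianPDFReal 0 v x).toNNReal • x ^ n : ℝ → ℝ)
      = fun x : ℝ => (√(2 * π * v))⁻¹ * (x ^ n * Real.exp (-(2 * (v:ℝ))⁻¹ * x ^ 2)) := by
    ext x
    rw [NNReal.smul_def, smul_eq_mul, Real.coe_toNNReal _ (gaussianPDFReal_nonneg 0 v x),
      snar_pdf_eq]
    ring
  rw [this]
  exact (snar_integrable_pow_mul_exp hb n).const_mul _

lemma snar_gauss_K : (√(2 * π * (v:ℝ)))⁻¹ * ∫ x : ℝ, Real.exp (-(2 * (v:ℝ))⁻¹ * x ^ 2) = 1 := by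
  have h := integral_gaussianPDFReal_eq_one 0 hv
  rw [show (fun x => gaussianPDFReal 0 v x)
      = fun x : ℝ => (√(2 * π * v))⁻¹ * Real.exp (-(2 * (v:ℝ))⁻¹ * x ^ 2) from
    funext (snar_pdf_eq), MeasureTheory.integral_const_mul] at h
  exact h

lemma snar_gauss_moment (n : ℕ) :
    ∫ x, x ^ n ∂(gaussianReal 0 v)
      = (√(2 * π * (v:ℝ)))⁻¹ * ∫ x : ℝ, x ^ n * Real.exp (-(2 * (v:ℝ))⁻¹ * x ^ 2) := by
  rw [snar_gauss_bridge hv]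
  rw [← MeasureTheory.integral_const_mul]
  congr 1
  ext x
  rw [snar_pdf_eq]
  ring

lemma snar_gauss_moment_one : ∫ x, x ∂(gaussianReal 0 v) = 0 := by
  have h := snar_gauss_moment hv 1
  have h0 := snar_integral_odd_pow_mul_exp (b := (2 * (v:ℝ))⁻¹) 1 odd_one
  simp only [pow_one] at h h0
  rw [h, h0, mul_zero]

lemma snar_gauss_moment_three : ∫ x, x ^ 3 ∂(gaussianReal 0 v) = 0 := by
  rw [snar_gauss_moment hv 3, snar_integral_odd_pow_mul_exp 3 (by decide), mul_zero]

lemma snar_gauss_moment_two : ∫ x, x ^ 2 ∂(gaussianReal 0 v) = v := by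
  have hvpos : (0:ℝ) < v := by positivity
  have hb : (0:ℝ) < (2 * (v:ℝ))⁻¹ := by positivity
  have h := snar_gauss_moment hv 2
  have hibp := snar_ibp hb 0
  simp only [pow_zero, one_mul, Nat.cast_zero, zero_add] at hibp
  have hc : (1:ℝ) / (2 * (2 * (v:ℝ))⁻¹) = v := by field_simp
  rw [h, hibp, hc]
  have hK := snar_gauss_K hv
  linear_combination (v : ℝ) * hK

lemma snar_gauss_moment_four : ∫ x, x ^ 4 ∂(gaussianReal 0 v) = 3 * v ^ 2 := by
  have hvpos : (0:ℝ) < v := by positivity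
  have hb : (0:ℝ) < (2 * (v:ℝ))⁻¹ := by positivity
  have h := snar_gauss_moment hv 4
  have hibp4 := snar_ibp hb 2
  have hibp2 := snar_ibp hb 0
  simp only [pow_zero, one_mul, Nat.cast_zero, zero_add] at hibp2
  have hcast : ((2:ℕ):ℝ) + 1 = 3 := by norm_num
  rw [hcast] at hibp4
  have hc1 : (1:ℝ) / (2 * (2 * (v:ℝ))⁻¹) = v := by field_simp
  have hc3 : (3:ℝ) / (2 * (2 * (v:ℝ))⁻¹) = 3 * v := by field_simp
  rw [h, show (4:ℕ) = 2 + 2 by norm_num, hibp4, hibp2, hc1, hc3]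
  have hK := snar_gauss_K hv
  linear_combination (3 * (v:ℝ) ^ 2) * hK

end Gauss

end SnarAux

/-- **Gaussian-innovation kurtosis** (Section 2): if `Y`, `s`, `ε` are mutually
independent, `s` is Bernoulli(p) with `p ∈ (0,1)`, `ε ~ N(0, σ²)` with `σ > 0`,
`E[Y⁴] < ∞`, `φ ≠ 0` with `0 < pφ⁴ < 1`, and `sφ|Y| + ε =_d Y`, then
`E[Y⁴]/(E[Y²])² = 3(1 − p²φ⁴)/(1 − pφ⁴) > 3`, so `Y` is heavier-tailed than Gaussian. -/
theorem snar_gaussian_kurtosis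
    {Ω : Type*} [MeasureSpace Ω] [IsProbabilityMeasure (ℙ : Measure Ω)]
    (Y s ε : Ω → ℝ)
    (hY : Measurable Y) (hs : Measurable s) (hε : Measurable ε)
    (hindep : iIndepFun ![Y, s, ε] ℙ)
    (p : ℝ) (hp : p ∈ Set.Ioo (0 : ℝ) 1)
    (hs1 : ℙ {ω | s ω = 1} = ENNReal.ofReal p)
    (hs0 : ℙ {ω | s ω = 0} = ENNReal.ofReal (1 - p))
    (σ : ℝ) (hσ : 0 < σ)
    (hgauss : Measure.map ε ℙ = gaussianReal 0 (Real.toNNReal (σ ^ 2)))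
    (hY4int : Integrable (fun ω => (Y ω) ^ 4) ℙ)
    (φ : ℝ) (hφ : φ ≠ 0) (hφp : 0 < p * φ ^ 4) (hφp1 : p * φ ^ 4 < 1)
    (hstat : Measure.map (fun ω => s ω * φ * |Y ω| + ε ω) ℙ = Measure.map Y ℙ) :
    (∫ ω, (Y ω) ^ 4 ∂ℙ) / (∫ ω, (Y ω) ^ 2 ∂ℙ) ^ 2
        = 3 * (1 - p ^ 2 * φ ^ 4) / (1 - p * φ ^ 4) ∧
      3 < (∫ ω, (Y ω) ^ 4 ∂ℙ) / (∫ ω, (Y ω) ^ 2 ∂ℙ) ^ 2 := by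
  obtain ⟨hp0, hp1⟩ := hp
  set v : NNReal := Real.toNNReal (σ ^ 2) with hvdef
  have hσ2 : (0:ℝ) < σ ^ 2 := by positivity
  have hv : v ≠ 0 := by
    simp only [hvdef, ne_eq, Real.toNNReal_eq_zero, not_le]
    exact hσ2
  have hvc : (v : ℝ) = σ ^ 2 := Real.coe_toNNReal _ hσ2.le
  -- ε moments
  have hεint : ∀ n : ℕ, Integrable (fun ω => ε ω ^ n) ℙ := by
    intro n
    have h := snar_gauss_integrable_pow hv n
    rw [← hgauss] at h
    exact (integrable_map_measure ((continuous_pow n).measurable).aestronglyMeasurable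
      hε.aemeasurable).1 h
  have hεmom : ∀ n : ℕ, ∫ ω, ε ω ^ n ∂ℙ = ∫ x, x ^ n ∂(gaussianReal 0 v) := by
    intro n
    rw [← hgauss, integral_map hε.aemeasurable ((continuous_pow n).measurable).aestronglyMeasurable]
  have hε1 : ∫ ω, ε ω ∂ℙ = 0 := by
    have h := hεmom 1
    simp only [pow_one] at h
    rw [h, snar_gauss_moment_one hv]
  have hε2 : ∫ ω, ε ω ^ 2 ∂ℙ = σ ^ 2 := by rw [hεmom 2, snar_gauss_moment_two hv, hvc]
  have hε3 : ∫ ω, ε ω ^ 3 ∂ℙ = 0 := by rw [hεmom 3, snar_gauss_moment_three hv]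
  have hε4 : ∫ ω, ε ω ^ 4 ∂ℙ = 3 * σ ^ 4 := by
    rw [hεmom 4, snar_gauss_moment_four hv, hvc]; ring
  -- s facts
  have hAmeas : MeasurableSet {ω | s ω = 1} := hs (measurableSet_singleton 1)
  have hBmeas : MeasurableSet {ω | s ω = 0} := hs (measurableSet_singleton 0)
  have hs01 : ∀ᵐ ω ∂ℙ, s ω = 0 ∨ s ω = 1 := by
    rw [MeasureTheory.ae_iff]
    have hdisj : Disjoint {ω | s ω = 1} {ω | s ω = 0} := by
      rw [Set.disjoint_left]
      intro ω h1 h0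
      simp only [Set.mem_setOf_eq] at h1 h0
      rw [h1] at h0; norm_num at h0
    have hU : ℙ ({ω | s ω = 1} ∪ {ω | s ω = 0}) = 1 := by
      rw [measure_union hdisj hBmeas, hs1, hs0, ← ENNReal.ofReal_add hp0.le (by linarith)]
      norm_num
    have hcompl : ℙ ({ω | s ω = 1} ∪ {ω | s ω = 0})ᶜ = 0 := by
      rw [measure_compl (hAmeas.union hBmeas) (measure_ne_top _ _), hU, measure_univ,
        tsub_self]
    convert hcompl using 2
    ext ω
    simp only [Set.mem_setOf_eq, Set.mem_compl_iff, Set.mem_union]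
    tauto
  have hsint : Integrable s ℙ := by
    refine Integrable.mono' (integrable_const (1:ℝ)) hs.aestronglyMeasurable ?_
    filter_upwards [hs01] with ω hω
    rcases hω with h | h <;> simp [h]
  have hsmean : ∫ ω, s ω ∂ℙ = p := by
    have hcong : s =ᵐ[ℙ] Set.indicator {ω | s ω = 1} (fun _ => (1:ℝ)) := by
      filter_upwards [hs01] with ω hω
      rcases hω with h | h
      · rw [h, Set.indicator_of_notMem]
        simp only [Set.mem_setOf_eq, h]
        norm_num
      · rw [h, Set.indicator_of_mem]
        simpa using h
    rw [integral_congr_ae hcong, integral_indicator_const _ hAmeas, measureReal_def, hs1, smul_eq_mul, mul_one,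
      ENNReal.toReal_ofReal hp0.le]
  -- |Y| power bounds and integrability
  have habsY : ∀ a : ℕ, a ≤ 4 → ∀ ω, |Y ω| ^ a ≤ 1 + Y ω ^ 4 := by
    intro a ha ω
    have hY4 : (0:ℝ) ≤ Y ω ^ 4 := by positivity
    have hY4eq : |Y ω| ^ 4 = Y ω ^ 4 := by
      rw [pow_abs, abs_of_nonneg hY4]
    by_cases h : |Y ω| ≤ 1
    · have := pow_le_one₀ (abs_nonneg _) h (n := a)
      linarith
    · push_neg at h
      have := pow_le_pow_right₀ h.le ha
      rw [hY4eq] at this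
      linarith
  have hYk : ∀ a : ℕ, a ≤ 4 → Integrable (fun ω => |Y ω| ^ a) ℙ := by
    intro a ha
    refine Integrable.mono' ((integrable_const (1:ℝ)).add hY4int)
      ((hY.abs.pow_const a).aestronglyMeasurable) ?_
    refine Filter.Eventually.of_forall fun ω => ?_
    rw [Real.norm_eq_abs, abs_of_nonneg (by positivity)]
    exact habsY a ha ω
  -- X
  set X : Ω → ℝ := fun ω => s ω * φ * |Y ω| with hXdef
  have hXmeas : Measurable X := (hs.mul_const φ).mul hY.abs
  have hXk : ∀ a : ℕ, a ≤ 4 → Integrable (fun ω => X ω ^ a) ℙ := by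
    intro a ha
    refine Integrable.mono' (((integrable_const (1:ℝ)).add hY4int).const_mul (|φ| ^ a))
      ((hXmeas.pow_const a).aestronglyMeasurable) ?_
    filter_upwards [hs01] with ω hω
    have hsa : |s ω| ≤ 1 := by rcases hω with h | h <;> simp [h]
    have h1 : ‖X ω ^ a‖ = |s ω| ^ a * |φ| ^ a * |Y ω| ^ a := by
      rw [Real.norm_eq_abs, ← abs_pow, hXdef]
      simp only
      rw [mul_pow, mul_pow, abs_mul, abs_mul, abs_pow, abs_pow, abs_pow, abs_abs]
    rw [h1]
    simp only [Pi.add_apply]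
    have h2 : |s ω| ^ a ≤ 1 := pow_le_one₀ (abs_nonneg _) hsa
    have h3 : |Y ω| ^ a ≤ 1 + Y ω ^ 4 := habsY a ha ω
    have h4 : (0:ℝ) ≤ |φ| ^ a := by positivity
    have h5 : (0:ℝ) ≤ |Y ω| ^ a := by positivity
    have h6 := mul_le_mul_of_nonneg_right h2 (mul_nonneg h4 h5)
    have h7 := mul_le_mul_of_nonneg_left h3 h4
    nlinarith [h6, h7]
  -- independence
  have hmeasf : ∀ i, Measurable (![Y, s, ε] i) := by
    intro i
    fin_cases i <;> simp [hY, hs, hε]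
  have hXε : IndepFun X ε ℙ := by
    have h1 := hindep.indepFun_prodMk hmeasf 0 1 2 (by decide) (by decide)
    have h2 := h1.comp (φ := fun q : ℝ × ℝ => q.2 * φ * |q.1|) (ψ := id)
      ((measurable_snd.mul_const φ).mul measurable_fst.abs) measurable_id
    exact h2
  have hsY : IndepFun s Y ℙ := hindep.indepFun (show (1 : Fin 3) ≠ 0 by decide)
  -- E[X^a]
  have hEX : ∀ a : ℕ, 1 ≤ a → a ≤ 4 →
      ∫ ω, X ω ^ a ∂ℙ = p * φ ^ a * ∫ ω, |Y ω| ^ a ∂ℙ := by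
    intro a ha1 ha4
    have hcong : (fun ω => X ω ^ a) =ᵐ[ℙ] fun ω => s ω * (φ ^ a * |Y ω| ^ a) := by
      filter_upwards [hs01] with ω hω
      have hsa : s ω ^ a = s ω := by
        rcases hω with h | h
        · rw [h, zero_pow (by omega)]
        · rw [h, one_pow]
      rw [hXdef]
      simp only
      rw [mul_pow, mul_pow, hsa]
      ring
    rw [integral_congr_ae hcong]
    have hindep2 : IndepFun s (fun ω => φ ^ a * |Y ω| ^ a) ℙ :=
      hsY.comp measurable_id ((measurable_id.abs.pow_const a).const_mul (φ ^ a))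
    have hg : Integrable (fun ω => φ ^ a * |Y ω| ^ a) ℙ := (hYk a ha4).const_mul _
    have := hindep2.integral_fun_mul_eq_mul_integral hsint.1 hg.1
    have heq : ∫ ω, s ω * (φ ^ a * |Y ω| ^ a) ∂ℙ
        = (∫ ω, s ω ∂ℙ) * ∫ ω, φ ^ a * |Y ω| ^ a ∂ℙ := this
    rw [heq, hsmean, MeasureTheory.integral_const_mul]
    ring
  -- product integrability and expectations
  have hprod : ∀ a b : ℕ, a ≤ 4 → b ≤ 4 → Integrable (fun ω => X ω ^ a * ε ω ^ b) ℙ := by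
    intro a b ha hb
    exact (hXε.comp ((continuous_pow a).measurable) ((continuous_pow b).measurable)).integrable_mul
      (hXk a ha) (hεint b)
  have hEprod : ∀ a b : ℕ, a ≤ 4 → b ≤ 4 →
      ∫ ω, X ω ^ a * ε ω ^ b ∂ℙ = (∫ ω, X ω ^ a ∂ℙ) * ∫ ω, ε ω ^ b ∂ℙ := by
    intro a b ha hb
    exact (hXε.comp ((continuous_pow a).measurable) ((continuous_pow b).measurable)).integral_fun_mul_eq_mul_integral
      (hXk a ha).1 (hεint b).1
  -- transfer via hstat
  set m2 : ℝ := ∫ ω, Y ω ^ 2 ∂ℙ with hm2def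
  set m4 : ℝ := ∫ ω, Y ω ^ 4 ∂ℙ with hm4def
  have hXεmeas : Measurable fun ω => X ω + ε ω := hXmeas.add hε
  have hT : ∀ n : ℕ, ∫ ω, (X ω + ε ω) ^ n ∂ℙ = ∫ ω, Y ω ^ n ∂ℙ := by
    intro n
    have h1 : ∫ x : ℝ, x ^ n ∂(Measure.map (fun ω => X ω + ε ω) ℙ)
        = ∫ x : ℝ, x ^ n ∂(Measure.map Y ℙ) := by rw [hstat]
    rw [integral_map hXεmeas.aemeasurable ((continuous_pow n).measurable).aestronglyMeasurable,
      integral_map hY.aemeasurable ((continuous_pow n).measurable).aestronglyMeasurable] at h1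
    exact h1
  -- second moment equation
  have hsq : ∀ ω, (X ω + ε ω) ^ 2 = X ω ^ 2 + (2 * (X ω ^ 1 * ε ω ^ 1) + X ω ^ 0 * ε ω ^ 2) := by
    intro ω; ring
  have hint20 : Integrable (fun ω => X ω ^ 2) ℙ := hXk 2 (by norm_num)
  have hint21 : Integrable (fun ω => 2 * (X ω ^ 1 * ε ω ^ 1)) ℙ :=
    (hprod 1 1 (by norm_num) (by norm_num)).const_mul 2
  have hint22 : Integrable (fun ω => X ω ^ 0 * ε ω ^ 2) ℙ :=
    hprod 0 2 (by norm_num) (by norm_num)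
  have hint2sum : Integrable (fun ω => 2 * (X ω ^ 1 * ε ω ^ 1) + X ω ^ 0 * ε ω ^ 2) ℙ :=
    hint21.add hint22
  have heq2 : m2 = p * φ ^ 2 * m2 + σ ^ 2 := by
    have h := hT 2
    rw [show (fun ω => (X ω + ε ω) ^ 2)
        = fun ω => X ω ^ 2 + (2 * (X ω ^ 1 * ε ω ^ 1) + X ω ^ 0 * ε ω ^ 2) from
      funext hsq] at h
    rw [integral_add hint20 hint2sum, integral_add hint21 hint22,
      MeasureTheory.integral_const_mul, hEprod 1 1 (by norm_num) (by norm_num),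
      hEprod 0 2 (by norm_num) (by norm_num)] at h
    have hX0 : ∫ ω, X ω ^ 0 ∂ℙ = 1 := by simp
    have hε1' : ∫ ω, ε ω ^ 1 ∂ℙ = 0 := by simpa using hε1
    rw [hX0, hε1', hε2, mul_zero, mul_zero, one_mul] at h
    have hEX2 := hEX 2 (by norm_num) (by norm_num)
    have hY2 : ∫ ω, |Y ω| ^ 2 ∂ℙ = m2 := by
      rw [hm2def]
      congr 1
      ext ω
      rw [pow_abs, abs_of_nonneg (by positivity)]
    rw [hEX2, hY2] at h
    rw [hm2def] at *
    linarith [h]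
  -- fourth moment equation
  have hq4 : ∀ ω, (X ω + ε ω) ^ 4
      = X ω ^ 4 + (4 * (X ω ^ 3 * ε ω ^ 1) + (6 * (X ω ^ 2 * ε ω ^ 2)
        + (4 * (X ω ^ 1 * ε ω ^ 3) + X ω ^ 0 * ε ω ^ 4))) := by
    intro ω; ring
  have hint40 : Integrable (fun ω => X ω ^ 4) ℙ := hXk 4 (by norm_num)
  have hint41 : Integrable (fun ω => 4 * (X ω ^ 3 * ε ω ^ 1)) ℙ :=
    (hprod 3 1 (by norm_num) (by norm_num)).const_mul 4
  have hint42 : Integrable (fun ω => 6 * (X ω ^ 2 * ε ω ^ 2)) ℙ :=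
    (hprod 2 2 (by norm_num) (by norm_num)).const_mul 6
  have hint43 : Integrable (fun ω => 4 * (X ω ^ 1 * ε ω ^ 3)) ℙ :=
    (hprod 1 3 (by norm_num) (by norm_num)).const_mul 4
  have hint44 : Integrable (fun ω => X ω ^ 0 * ε ω ^ 4) ℙ :=
    hprod 0 4 (by norm_num) (by norm_num)
  have hint434 : Integrable (fun ω => 4 * (X ω ^ 1 * ε ω ^ 3) + X ω ^ 0 * ε ω ^ 4) ℙ :=
    hint43.add hint44
  have hint42' : Integrable (fun ω => 6 * (X ω ^ 2 * ε ω ^ 2)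
      + (4 * (X ω ^ 1 * ε ω ^ 3) + X ω ^ 0 * ε ω ^ 4)) ℙ := hint42.add hint434
  have hint41' : Integrable (fun ω => 4 * (X ω ^ 3 * ε ω ^ 1) + (6 * (X ω ^ 2 * ε ω ^ 2)
      + (4 * (X ω ^ 1 * ε ω ^ 3) + X ω ^ 0 * ε ω ^ 4))) ℙ := hint41.add hint42'
  have heq4 : m4 = p * φ ^ 4 * m4 + 6 * (p * φ ^ 2 * m2) * σ ^ 2 + 3 * σ ^ 4 := by
    have h := hT 4
    rw [show (fun ω => (X ω + ε ω) ^ 4)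
        = fun ω => X ω ^ 4 + (4 * (X ω ^ 3 * ε ω ^ 1) + (6 * (X ω ^ 2 * ε ω ^ 2)
          + (4 * (X ω ^ 1 * ε ω ^ 3) + X ω ^ 0 * ε ω ^ 4))) from funext hq4] at h
    rw [integral_add hint40 hint41', integral_add hint41 hint42',
      integral_add hint42 hint434, integral_add hint43 hint44,
      MeasureTheory.integral_const_mul, MeasureTheory.integral_const_mul,
      MeasureTheory.integral_const_mul,
      hEprod 3 1 (by norm_num) (by norm_num), hEprod 2 2 (by norm_num) (by norm_num),
      hEprod 1 3 (by norm_num) (by norm_num), hEprod 0 4 (by norm_num) (by norm_num)] at h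
    have hX0 : ∫ ω, X ω ^ 0 ∂ℙ = 1 := by simp
    have hε1' : ∫ ω, ε ω ^ 1 ∂ℙ = 0 := by simpa using hε1
    rw [hX0, hε1', hε2, hε3, hε4, mul_zero, mul_zero, mul_zero, mul_zero, one_mul] at h
    have hEX4 := hEX 4 (by norm_num) (by norm_num)
    have hEX2 := hEX 2 (by norm_num) (by norm_num)
    have hY4 : ∫ ω, |Y ω| ^ 4 ∂ℙ = m4 := by
      rw [hm4def]
      congr 1
      ext ω
      rw [pow_abs, abs_of_nonneg (by positivity)]
    have hY2 : ∫ ω, |Y ω| ^ 2 ∂ℙ = m2 := by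
      rw [hm2def]
      congr 1
      ext ω
      rw [pow_abs, abs_of_nonneg (by positivity)]
    rw [hEX4, hEX2, hY4, hY2] at h
    rw [hm4def] at *
    linarith [h]
  -- algebra
  have hm2nonneg : (0:ℝ) ≤ m2 := integral_nonneg fun ω => by positivity
  have hm2pos : (0:ℝ) < m2 := by nlinarith [sq_nonneg φ, mul_nonneg (mul_nonneg hp0.le (sq_nonneg φ)) hm2nonneg]
  have hdenom : (0:ℝ) < 1 - p * φ ^ 4 := by linarith
  have hkey : m4 * (1 - p * φ ^ 4) = 3 * m2 ^ 2 * (1 - p ^ 2 * φ ^ 4) := by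
    linear_combination heq4 - (3 * σ ^ 2 + 3 * m2 * (1 - p * φ ^ 2) + 6 * p * φ ^ 2 * m2) * heq2
  constructor
  · rw [div_eq_div_iff (pow_ne_zero 2 (ne_of_gt hm2pos)) (ne_of_gt hdenom)]
    linarith [hkey]
  · have heq : m4 / m2 ^ 2 = 3 * (1 - p ^ 2 * φ ^ 4) / (1 - p * φ ^ 4) := by
      rw [div_eq_div_iff (pow_ne_zero 2 (ne_of_gt hm2pos)) (ne_of_gt hdenom)]
      linarith [hkey]
    rw [heq, lt_div_iff₀ hdenom]
    nlinarith [hφp, hp1]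
end

section
/- Let φ, φ₀ be nonzero real numbers, p, p₀ ∈ (0,1), and σ², σ₀² > 0. Let Y be a real random variable such that Y² is not almost surely equal to any constant. If almost surely p(1−p)φ²Y² + σ² = p₀(1−p₀)φ₀²Y² + σ₀², and pφ = p₀φ₀, then φ = φ₀, p = p₀, and σ² = σ₀². (This is the identifiability step in the proof of Theorem 2, the strong consistency of the QMLE.) -/
open MeasureTheory ProbabilityTheory

/-- **Identifiability** (proof of Theorem 2): if `Y²` is not a.s. constant,
`p(1−p)φ²Y² + σ² = p₀(1−p₀)φ₀²Y² + σ₀²` almost surely, and `pφ = p₀φ₀`,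
then `(φ, p, σ²) = (φ₀, p₀, σ₀²)`. -/
theorem snar_identifiability
    {Ω : Type*} [MeasureSpace Ω] [IsProbabilityMeasure (ℙ : Measure Ω)]
    (φ φ₀ : ℝ) (hφ : φ ≠ 0) (hφ₀ : φ₀ ≠ 0)
    (p p₀ : ℝ) (hp : p ∈ Set.Ioo (0 : ℝ) 1) (hp₀ : p₀ ∈ Set.Ioo (0 : ℝ) 1)
    (σ2 σ02 : ℝ) (hσ2 : 0 < σ2) (hσ02 : 0 < σ02)
    (Y : Ω → ℝ)
    (hYnc : ¬ ∃ c : ℝ, ∀ᵐ ω ∂ℙ, (Y ω) ^ 2 = c)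
    (heq : ∀ᵐ ω ∂ℙ,
      p * (1 - p) * φ ^ 2 * (Y ω) ^ 2 + σ2
        = p₀ * (1 - p₀) * φ₀ ^ 2 * (Y ω) ^ 2 + σ02)
    (hmean : p * φ = p₀ * φ₀) :
    φ = φ₀ ∧ p = p₀ ∧ σ2 = σ02 := by
  obtain ⟨hp1, hp2⟩ := hp
  obtain ⟨hp01, hp02⟩ := hp₀
  set a := p * (1 - p) * φ ^ 2 with ha
  set a₀ := p₀ * (1 - p₀) * φ₀ ^ 2 with ha₀
  have haa : a = a₀ := by
    by_contra hne
    apply hYnc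
    refine ⟨(σ02 - σ2) / (a - a₀), ?_⟩
    filter_upwards [heq] with ω hω
    have hsub : a - a₀ ≠ 0 := sub_ne_zero.mpr hne
    field_simp
    linarith [hω]
  have hσ : σ2 = σ02 := by
    have := heq.exists
    obtain ⟨ω, hω⟩ := this
    rw [haa] at hω
    linarith
  -- pφ ≠ 0
  have hm : p * φ ≠ 0 := mul_ne_zero (ne_of_gt hp1) hφ
  -- a = (pφ)((1-p)φ), a₀ = (p₀φ₀)((1-p₀)φ₀)
  have key : (1 - p) * φ = (1 - p₀) * φ₀ := by
    have h1 : (p * φ) * ((1 - p) * φ) = (p₀ * φ₀) * ((1 - p₀) * φ₀) := by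
      rw [ha, ha₀] at haa; ring_nf; ring_nf at haa; linarith
    rw [← hmean] at h1
    exact mul_left_cancel₀ hm h1
  have hφeq : φ = φ₀ := by nlinarith [key, hmean]
  have hpeq : p = p₀ := by
    rw [hφeq] at hmean
    exact mul_right_cancel₀ hφ₀ hmean
  exact ⟨hφeq, hpeq, hσ⟩
end

section
/- Let φ, φ₀ be nonzero real numbers, p, p₀ ∈ (0,1), and σ², σ₀² > 0. Define q(y) = p(1−p)φ²y² + σ² and q₀(y) = p₀(1−p₀)φ₀²y² + σ₀². Let Y be a real random variable such that Y² is not almost surely equal to any constant. Then E[ log(q(Y)/q₀(Y)) + q₀(Y)/q(Y) − 1 + (pφ − p₀φ₀)²·Y²/q(Y) ] ≥ 0, and equality holds if and only if (φ, p, σ²) = (φ₀, p₀, σ₀²). (This expectation is the almost-sure limit of the normalized quasi-log-likelihood ratio in the proof of Theorem 2; the integrand is bounded, hence integrable.) -/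
open MeasureTheory ProbabilityTheory

set_option maxHeartbeats 800000

private lemma key_ineq' {x : ℝ} (hx : 0 < x) : 0 ≤ Real.log x + x⁻¹ - 1 := by
  have h := Real.log_le_sub_one_of_pos (inv_pos.mpr hx)
  rw [Real.log_inv] at h
  linarith

private lemma key_eq' {x : ℝ} (hx : 0 < x) (h : Real.log x + x⁻¹ - 1 ≤ 0) : x = 1 := by
  by_contra hne
  have hinv : x⁻¹ ≠ 1 := by simpa [inv_eq_one] using hne
  have h2 := Real.log_lt_sub_one_of_pos (inv_pos.mpr hx) hinv
  rw [Real.log_inv] at h2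
  linarith

/-- **Quasi-likelihood limit inequality** (proof of Theorem 2): with
`q(y) = p(1−p)φ²y² + σ²` and `q₀(y) = p₀(1−p₀)φ₀²y² + σ₀²`, if `Y²` is not a.s.
constant, then
`E[log(q(Y)/q₀(Y)) + q₀(Y)/q(Y) − 1 + (pφ − p₀φ₀)²Y²/q(Y)] ≥ 0`,
with equality iff `(φ, p, σ²) = (φ₀, p₀, σ₀²)`. -/
theorem snar_qmle_limit_inequality
    {Ω : Type*} [MeasureSpace Ω] [IsProbabilityMeasure (ℙ : Measure Ω)]
    (φ φ₀ : ℝ) (hφ : φ ≠ 0) (hφ₀ : φ₀ ≠ 0)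
    (p p₀ : ℝ) (hp : p ∈ Set.Ioo (0 : ℝ) 1) (hp₀ : p₀ ∈ Set.Ioo (0 : ℝ) 1)
    (σ2 σ02 : ℝ) (hσ2 : 0 < σ2) (hσ02 : 0 < σ02)
    (q q₀ : ℝ → ℝ)
    (hq : ∀ y : ℝ, q y = p * (1 - p) * φ ^ 2 * y ^ 2 + σ2)
    (hq₀ : ∀ y : ℝ, q₀ y = p₀ * (1 - p₀) * φ₀ ^ 2 * y ^ 2 + σ02)
    (Y : Ω → ℝ) (hY : Measurable Y)
    (hYnc : ¬ ∃ c : ℝ, ∀ᵐ ω ∂ℙ, (Y ω) ^ 2 = c) :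
    0 ≤ ∫ ω, (Real.log (q (Y ω) / q₀ (Y ω)) + q₀ (Y ω) / q (Y ω) - 1
          + (p * φ - p₀ * φ₀) ^ 2 * (Y ω) ^ 2 / q (Y ω)) ∂ℙ ∧
      ((∫ ω, (Real.log (q (Y ω) / q₀ (Y ω)) + q₀ (Y ω) / q (Y ω) - 1
          + (p * φ - p₀ * φ₀) ^ 2 * (Y ω) ^ 2 / q (Y ω)) ∂ℙ) = 0
        ↔ (φ = φ₀ ∧ p = p₀ ∧ σ2 = σ02)) := by
  obtain ⟨hp1, hp2⟩ := hp
  obtain ⟨hp01, hp02⟩ := hp₀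
  have hφ2 : 0 < φ ^ 2 := by positivity
  have hφ02 : 0 < φ₀ ^ 2 := by positivity
  set a : ℝ := p * (1 - p) * φ ^ 2 with ha_def
  set a₀ : ℝ := p₀ * (1 - p₀) * φ₀ ^ 2 with ha₀_def
  have ha : 0 < a := by
    have : 0 < 1 - p := by linarith
    positivity
  have ha₀ : 0 < a₀ := by
    have : 0 < 1 - p₀ := by linarith
    positivity
  set k : ℝ := (p * φ - p₀ * φ₀) ^ 2 with hk_def
  have hk : 0 ≤ k := sq_nonneg _
  have hqpos : ∀ y : ℝ, 0 < q y := by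
    intro y
    rw [hq y]
    have := mul_nonneg ha.le (sq_nonneg y)
    nlinarith
  have hq₀pos : ∀ y : ℝ, 0 < q₀ y := by
    intro y
    rw [hq₀ y]
    have := mul_nonneg ha₀.le (sq_nonneg y)
    nlinarith
  set F : ℝ → ℝ := fun y =>
    Real.log (q y / q₀ y) + q₀ y / q y - 1 + k * y ^ 2 / q y with hF_def
  -- pointwise nonnegativity
  have hF0 : ∀ y : ℝ, 0 ≤ F y := by
    intro y
    have hx : 0 < q y / q₀ y := div_pos (hqpos y) (hq₀pos y)
    have h1 := key_ineq' hx
    rw [inv_div] at h1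
    have h2 : 0 ≤ k * y ^ 2 / q y :=
      div_nonneg (mul_nonneg hk (sq_nonneg y)) (hqpos y).le
    simp only [hF_def]
    linarith
  -- pointwise equality case
  have hFeq : ∀ y : ℝ, F y = 0 → q y = q₀ y ∧ k * y ^ 2 = 0 := by
    intro y h
    have hx : 0 < q y / q₀ y := div_pos (hqpos y) (hq₀pos y)
    have h1 := key_ineq' hx
    rw [inv_div] at h1
    have h2 : 0 ≤ k * y ^ 2 / q y :=
      div_nonneg (mul_nonneg hk (sq_nonneg y)) (hqpos y).le
    simp only [hF_def] at h
    have hle : Real.log (q y / q₀ y) + (q y / q₀ y)⁻¹ - 1 ≤ 0 := by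
      rw [inv_div]; linarith
    have hone := key_eq' hx hle
    have hqq : q y = q₀ y := (div_eq_one_iff_eq (hq₀pos y).ne').mp hone
    refine ⟨hqq, ?_⟩
    have hzero : k * y ^ 2 / q y = 0 := by
      rw [hqq] at h ⊢
      have : Real.log (q₀ y / q₀ y) = 0 := by
        rw [div_self (hq₀pos y).ne']; exact Real.log_one
      rw [this, div_self (hq₀pos y).ne'] at h
      linarith
    exact (div_eq_zero_iff.mp hzero).resolve_right (hqpos y).ne'
  -- boundedness
  set M : ℝ := max (a / a₀) (σ2 / σ02) with hM_def
  set m : ℝ := min (a / a₀) (σ2 / σ02) with hm_def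
  have hm : 0 < m := lt_min (div_pos ha ha₀) (div_pos hσ2 hσ02)
  have hM : 0 < M := lt_of_lt_of_le hm (min_le_max)
  have hup : ∀ y : ℝ, q y ≤ M * q₀ y := by
    intro y
    have h1 : a ≤ M * a₀ := by
      rw [← div_le_iff₀ ha₀] at *
      exact le_max_left _ _
    have h2 : σ2 ≤ M * σ02 := by
      rw [show σ2 ≤ M * σ02 ↔ σ2 / σ02 ≤ M from (div_le_iff₀ hσ02).symm]
      exact le_max_right _ _
    rw [hq y, hq₀ y]
    nlinarith [sq_nonneg y]
  have hlo : ∀ y : ℝ, m * q₀ y ≤ q y := by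
    intro y
    have h1 : m * a₀ ≤ a := by
      have : m ≤ a / a₀ := min_le_left _ _
      rw [le_div_iff₀ ha₀] at this
      linarith
    have h2 : m * σ02 ≤ σ2 := by
      have : m ≤ σ2 / σ02 := min_le_right _ _
      rw [le_div_iff₀ hσ02] at this
      linarith
    rw [hq y, hq₀ y]
    nlinarith [sq_nonneg y]
  set C : ℝ := Real.log M + 1 / m + k / a with hC_def
  have hbound : ∀ y : ℝ, ‖F y‖ ≤ C := by
    intro y
    rw [Real.norm_eq_abs, abs_of_nonneg (hF0 y)]
    have hlog : Real.log (q y / q₀ y) ≤ Real.log M := by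
      apply Real.log_le_log (div_pos (hqpos y) (hq₀pos y))
      rw [div_le_iff₀ (hq₀pos y)]
      exact hup y
    have hratio : q₀ y / q y ≤ 1 / m := by
      rw [div_le_div_iff₀ (hqpos y) hm]
      nlinarith [hlo y]
    have hterm : k * y ^ 2 / q y ≤ k / a := by
      have h1 : a * y ^ 2 ≤ q y := by
        rw [hq y]; nlinarith [sq_nonneg y]
      rw [div_le_div_iff₀ (hqpos y) ha]
      nlinarith [mul_nonneg hk (sq_nonneg y), hqpos y]
    simp only [hF_def, hC_def]
    linarith
  -- measurability and integrability
  have hqm : Measurable q := by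
    have : q = fun y => a * y ^ 2 + σ2 := funext hq
    rw [this]; fun_prop
  have hq₀m : Measurable q₀ := by
    have : q₀ = fun y => a₀ * y ^ 2 + σ02 := funext hq₀
    rw [this]; fun_prop
  have hFm : Measurable F := by
    apply Measurable.add
    · apply Measurable.sub
      · exact (Real.measurable_log.comp (hqm.div hq₀m)).add (hq₀m.div hqm)
      · exact measurable_const
    · exact (measurable_const.mul ((measurable_id.pow_const 2))).div hqm
  have hInt : Integrable (fun ω => F (Y ω)) ℙ := by
    refine ⟨(hFm.comp hY).aestronglyMeasurable, ?_⟩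
    exact HasFiniteIntegral.of_bounded (ae_of_all _ fun ω => hbound (Y ω))
  have hgoal_eq : (∫ ω, (Real.log (q (Y ω) / q₀ (Y ω)) + q₀ (Y ω) / q (Y ω) - 1
          + (p * φ - p₀ * φ₀) ^ 2 * (Y ω) ^ 2 / q (Y ω)) ∂ℙ) = ∫ ω, F (Y ω) ∂ℙ := rfl
  rw [hgoal_eq]
  refine ⟨integral_nonneg fun ω => hF0 (Y ω), ?_⟩
  constructor
  · intro h0
    have hae : ∀ᵐ ω ∂ℙ, F (Y ω) = 0 := by
      have := (integral_eq_zero_iff_of_nonneg (fun ω => hF0 (Y ω)) hInt).mp h0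
      filter_upwards [this] with ω hω using hω
    have haeq : ∀ᵐ ω ∂ℙ, q (Y ω) = q₀ (Y ω) ∧ k * (Y ω) ^ 2 = 0 := by
      filter_upwards [hae] with ω hω using hFeq (Y ω) hω
    -- p φ = p₀ φ₀
    have hpφ : p * φ = p₀ * φ₀ := by
      by_contra hne
      apply hYnc
      refine ⟨0, ?_⟩
      filter_upwards [haeq] with ω hω
      have hk0 : k ≠ 0 := pow_ne_zero 2 (sub_ne_zero.mpr hne)
      exact (mul_eq_zero.mp hω.2).resolve_left hk0
    -- a = a₀
    have haa : a = a₀ := by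
      by_contra hne
      apply hYnc
      refine ⟨(σ02 - σ2) / (a - a₀), ?_⟩
      filter_upwards [haeq] with ω hω
      have h := hω.1
      rw [hq (Y ω), hq₀ (Y ω)] at h
      rw [eq_div_iff (sub_ne_zero.mpr hne)]
      linear_combination h
    -- σ2 = σ02
    have : (MeasureTheory.ae (ℙ : Measure Ω)).NeBot :=
      ae_neBot.mpr (IsProbabilityMeasure.ne_zero _)
    obtain ⟨ω, hω⟩ := haeq.exists
    have hσ : σ2 = σ02 := by
      have h := hω.1
      rw [hq (Y ω), hq₀ (Y ω)] at h
      rw [haa] at h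
      linarith
    -- algebra: p = p₀, φ = φ₀
    have hsq : p ^ 2 * φ ^ 2 = p₀ ^ 2 * φ₀ ^ 2 := by
      linear_combination (p * φ + p₀ * φ₀) * hpφ
    have haa' : p * (1 - p) * φ ^ 2 = p₀ * (1 - p₀) * φ₀ ^ 2 := haa
    have h1 : p * φ ^ 2 = p₀ * φ₀ ^ 2 := by linear_combination haa' + hsq
    have hkey : p₀ * φ₀ ^ 2 * (p₀ - p) = 0 := by linear_combination p * h1 - hsq
    have hpp : p = p₀ := by
      rcases mul_eq_zero.mp hkey with h | h
      · exact absurd h (by positivity)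
      · linarith
    have hφφ : φ = φ₀ := by
      rw [hpp] at hpφ
      exact mul_left_cancel₀ (ne_of_gt hp01) hpφ
    exact ⟨hφφ, hpp, hσ⟩
  · rintro ⟨rfl, rfl, rfl⟩
    have hzero : ∀ ω : Ω, F (Y ω) = 0 := by
      intro ω
      have hqq : q (Y ω) = q₀ (Y ω) := by rw [hq, hq₀]
      show Real.log (q (Y ω) / q₀ (Y ω)) + q₀ (Y ω) / q (Y ω) - 1
          + k * (Y ω) ^ 2 / q (Y ω) = 0
      have hk0 : k = 0 := by rw [hk_def]; ring
      rw [hqq, div_self (hq₀pos (Y ω)).ne', Real.log_one, hk0]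
      ring
    rw [integral_congr_ae (ae_of_all _ hzero)]
    simp
end

section
/- Let (ε_n)_{n≥0} be i.i.d. real random variables and (s_n)_{n≥1} be i.i.d. Bernoulli(p) random variables with p ∈ [0,1], and suppose (ε_n)_{n≥0} and (s_n)_{n≥1} are mutually independent. Fix φ ∈ ℝ and define y_0 = ε_0 and y_n = s_n φ|y_{n−1}| + ε_n for n ≥ 1; also define the auxiliary process z_0 = ε_0 and z_n = φ|z_{n−1}| + ε_n for n ≥ 1. Then for all integers k ≥ 1 and t ≥ k+2 and every c ∈ ℝ, P( y_t − φ|y_{t−1}| ≤ c, s_t = 0, s_{t−1} = ⋯ = s_{t−k} = 1, s_{t−k−1} = 0 ) = p^k (1−p)² · P( ε_{k+1} − φ|z_k| ≤ c ), where ε_{k+1} is independent of z_k. (This is the exact factorization proved for Proposition 1: the conditional probability that the collapse of a cumulative bubble is correctly tagged by the residual rule r_t ≤ c equals the corresponding exceedance probability of the auxiliary explosive bubble process; if moreover the distribution of ε_0 is symmetric, P(ε_{k+1} − φ|z_k| ≤ c) = P(z_{k+1} ≥ −c).) -/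
open MeasureTheory ProbabilityTheory

noncomputable def bubbleSeq (φ : ℝ) (e : ℕ → ℝ) : ℕ → ℝ
  | 0 => e 0
  | n + 1 => φ * |bubbleSeq φ e n| + e (n + 1)

lemma bubbleSeq_congr (φ : ℝ) {e e' : ℕ → ℝ} :
    ∀ n, (∀ m ≤ n, e m = e' m) → bubbleSeq φ e n = bubbleSeq φ e' n := by
  intro n
  induction n with
  | zero => intro h; simpa [bubbleSeq] using h 0 le_rfl
  | succ n ih =>
      intro h
      simp only [bubbleSeq]
      rw [ih (fun m hm => h m (hm.trans (Nat.le_succ n))), h (n+1) le_rfl]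

def extendFin (m : ℕ) (v : Fin m → ℝ) (n : ℕ) : ℝ := if h : n < m then v ⟨n, h⟩ else 0

lemma extendFin_measurable (m n : ℕ) : Measurable fun v : Fin m → ℝ => extendFin m v n := by
  unfold extendFin
  by_cases h : n < m
  · simpa [h] using measurable_pi_apply (⟨n, h⟩ : Fin m)
  · simp [h]

lemma bubbleSeq_extendFin_measurable (φ : ℝ) (m j : ℕ) :
    Measurable fun v : Fin m → ℝ => bubbleSeq φ (extendFin m v) j := by
  induction j with
  | zero => simpa [bubbleSeq] using extendFin_measurable m 0
  | succ j ih =>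
      simp only [bubbleSeq]
      exact (measurable_const.mul ih.abs).add (extendFin_measurable m (j+1))

noncomputable def resid (φ : ℝ) (k : ℕ) (v : Fin (k+2) → ℝ) : ℝ :=
  extendFin (k+2) v (k+1) - φ * |bubbleSeq φ (extendFin (k+2) v) k|

lemma resid_measurable (φ : ℝ) (k : ℕ) : Measurable (resid φ k) :=
  (extendFin_measurable (k+2) (k+1)).sub
    (measurable_const.mul (bubbleSeq_extendFin_measurable φ (k+2) k).abs)

lemma resid_apply (φ : ℝ) (k : ℕ) (e : ℕ → ℝ) :
    resid φ k (fun i : Fin (k+2) => e i.1) = e (k+1) - φ * |bubbleSeq φ e k| := by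
  have h2 : bubbleSeq φ (extendFin (k+2) (fun i : Fin (k+2) => e i.1)) k = bubbleSeq φ e k := by
    refine bubbleSeq_congr φ k (fun m hm => ?_)
    have hm2 : m < k + 2 := by omega
    simp [extendFin, hm2]
  simp [resid, h2, extendFin]

/-- **Factorization for Proposition 1** (residual-based bubble tagging): with
`y_0 = ε_0`, `y_n = s_n φ|y_{n−1}| + ε_n` and the auxiliary process `z_0 = ε_0`,
`z_n = φ|z_{n−1}| + ε_n`, for all `k ≥ 1`, `t ≥ k+2` and `c ∈ ℝ`,
`P(y_t − φ|y_{t−1}| ≤ c, s_t = 0, s_{t−1} = ⋯ = s_{t−k} = 1, s_{t−k−1} = 0)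
  = p^k (1−p)² · P(ε_{k+1} − φ|z_k| ≤ c)`. -/
theorem snar_residual_tagging_factorization
    {Ω : Type*} [MeasureSpace Ω] [IsProbabilityMeasure (ℙ : Measure Ω)]
    (ε : ℕ → Ω → ℝ) (s : ℕ → Ω → ℝ)
    (hεmeas : ∀ n, Measurable (ε n)) (hsmeas : ∀ n, Measurable (s n))
    -- the families (ε_n)_{n≥0} and (s_n)_{n≥1} are (mutually and internally) independent
    (hindep : iIndepFun (m := fun _ : ℕ ⊕ {n : ℕ // 1 ≤ n} => (inferInstance : MeasurableSpace ℝ))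
      (Sum.elim ε (fun j => s j.1)) ℙ)
    (hεident : ∀ n, IdentDistrib (ε n) (ε 0) ℙ ℙ)
    (p : ℝ) (hp : p ∈ Set.Icc (0 : ℝ) 1)
    (hs1 : ∀ n, 1 ≤ n → ℙ {ω | s n ω = 1} = ENNReal.ofReal p)
    (hs0 : ∀ n, 1 ≤ n → ℙ {ω | s n ω = 0} = ENNReal.ofReal (1 - p))
    (φ : ℝ) (y z : ℕ → Ω → ℝ)
    (hy0 : ∀ ω, y 0 ω = ε 0 ω)
    (hyrec : ∀ n : ℕ, ∀ ω, y (n + 1) ω = s (n + 1) ω * φ * |y n ω| + ε (n + 1) ω)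
    (hz0 : ∀ ω, z 0 ω = ε 0 ω)
    (hzrec : ∀ n : ℕ, ∀ ω, z (n + 1) ω = φ * |z n ω| + ε (n + 1) ω) :
    ∀ k t : ℕ, 1 ≤ k → k + 2 ≤ t → ∀ c : ℝ,
      ℙ ({ω | y t ω - φ * |y (t - 1) ω| ≤ c} ∩ {ω | s t ω = 0}
          ∩ {ω | ∀ l : ℕ, 1 ≤ l → l ≤ k → s (t - l) ω = 1}
          ∩ {ω | s (t - k - 1) ω = 0})
        = ENNReal.ofReal (p ^ k * (1 - p) ^ 2)
            * ℙ {ω | ε (k + 1) ω - φ * |z k ω| ≤ c} := by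
  intro k t hk hkt c
  obtain ⟨hp0, hp1⟩ := hp
  set a := t - k - 1 with ha_def
  have ha1 : 1 ≤ a := by omega
  have ht : t = a + (k + 1) := by omega
  have hmeasSum : ∀ i, Measurable (Sum.elim ε (fun j : {n : ℕ // 1 ≤ n} => s j.1) i) := by
    rintro (n | j)
    · exact hεmeas n
    · exact hsmeas j.1
  -- random vectors
  set X : Ω → Fin (k+2) → ℝ := fun ω i => ε (a + i.1) ω with hX_def
  set Y : Ω → Fin (k+2) → ℝ := fun ω i => s (a + i.1) ω with hY_def
  have hXmeas : Measurable X := measurable_pi_lambda _ (fun i => hεmeas (a + i.1))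
  set A : Set (Fin (k+2) → ℝ) := {v | resid φ k v ≤ c} with hA_def
  have hAmeas : MeasurableSet A := measurableSet_le (resid_measurable φ k) measurable_const
  set B : Set (Fin (k+2) → ℝ) :=
    {w | ∀ i : Fin (k+2), w i = if i.1 = 0 ∨ i.1 = k + 1 then (0:ℝ) else 1} with hB_def
  have hBmeas : MeasurableSet B := by
    have : B = ⋂ i : Fin (k+2),
        (fun w : Fin (k+2) → ℝ => w i) ⁻¹' {if i.1 = 0 ∨ i.1 = k + 1 then (0:ℝ) else 1} := by
      ext w; simp [hB_def]
    rw [this]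
    exact MeasurableSet.iInter fun i => (measurable_pi_apply i) (measurableSet_singleton _)
  -- Step A: the event equals X ⁻¹' A ∩ Y ⁻¹' B
  -- y follows the pure-bubble recursion on the s-event
  have hyclaim : ∀ ω, s a ω = 0 → (∀ l : ℕ, 1 ≤ l → l ≤ k → s (t - l) ω = 1) →
      ∀ j, j ≤ k → y (a + j) ω = bubbleSeq φ (fun n => ε (a + n) ω) j := by
    intro ω h4 h3 j
    induction j with
    | zero =>
        intro _
        have e := hyrec (a - 1) ω
        rw [show a - 1 + 1 = a by omega] at e
        rw [h4] at e
        simp only [zero_mul, zero_add] at e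
        simpa [bubbleSeq] using e
    | succ j ih =>
        intro hj
        have e := hyrec (a + j) ω
        have hs' : s (a + j + 1) ω = 1 := by
          have h := h3 (k - j) (by omega) (by omega)
          rwa [show t - (k - j) = a + j + 1 by omega] at h
        rw [hs'] at e
        simp only [one_mul] at e
        rw [show a + (j + 1) = a + j + 1 from rfl, e, ih (by omega)]
        simp only [bubbleSeq]
        rfl
  -- the residual identity on the s-event
  have hres : ∀ ω, s t ω = 0 → (∀ l : ℕ, 1 ≤ l → l ≤ k → s (t - l) ω = 1) → s a ω = 0 →
      y t ω - φ * |y (t - 1) ω| = resid φ k (X ω) := by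
    intro ω h2 h3 h4
    have e := hyrec (a + k) ω
    rw [show a + k + 1 = t by omega, h2] at e
    simp only [zero_mul, zero_add] at e
    have hXr : resid φ k (X ω) = ε (a + (k + 1)) ω - φ * |bubbleSeq φ (fun n => ε (a + n) ω) k| :=
      resid_apply φ k (fun n => ε (a + n) ω)
    rw [hXr, ← hyclaim ω h4 h3 k le_rfl, show a + (k + 1) = t by omega, ← e,
      show a + k = t - 1 by omega]
  have hset : ({ω | y t ω - φ * |y (t - 1) ω| ≤ c} ∩ {ω | s t ω = 0}
          ∩ {ω | ∀ l : ℕ, 1 ≤ l → l ≤ k → s (t - l) ω = 1}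
          ∩ {ω | s (t - k - 1) ω = 0}) = X ⁻¹' A ∩ Y ⁻¹' B := by
    ext ω
    simp only [Set.mem_inter_iff, Set.mem_setOf_eq, Set.mem_preimage, hA_def, hB_def]
    constructor
    · rintro ⟨⟨⟨h1, h2⟩, h3⟩, h4⟩
      refine ⟨by rw [← hres ω h2 h3 h4]; exact h1, ?_⟩
      intro i
      show s (a + i.1) ω = _
      by_cases hi0 : i.1 = 0
      · rw [if_pos (Or.inl hi0), hi0]
        simpa using h4
      · by_cases hik : i.1 = k + 1
        · rw [if_pos (Or.inr hik), hik, show a + (k + 1) = t by omega]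
          exact h2
        · have hlt := i.isLt
          rw [if_neg (by tauto)]
          have h := h3 (k + 1 - i.1) (by omega) (by omega)
          rwa [show t - (k + 1 - i.1) = a + i.1 by omega] at h
    · rintro ⟨hA, hB⟩
      simp only [hY_def] at hB
      have h2 : s t ω = 0 := by
        have h := hB ⟨k + 1, by omega⟩
        simpa [show a + (k + 1) = t by omega] using h
      have h4 : s a ω = 0 := by
        have h := hB ⟨0, by omega⟩
        simpa using h
      have h3 : ∀ l : ℕ, 1 ≤ l → l ≤ k → s (t - l) ω = 1 := by
        intro l hl1 hlk
        have h := hB ⟨k + 1 - l, by omega⟩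
        simp only [show a + (k + 1 - l) = t - l by omega] at h
        rw [h, if_neg (by omega)]
      exact ⟨⟨⟨by rw [hres ω h2 h3 h4]; exact hA, h2⟩, h3⟩, h4⟩
  -- Step B: independence of X and Y
  set Se : Finset (ℕ ⊕ {n : ℕ // 1 ≤ n}) :=
    Finset.univ.image (fun i : Fin (k+2) => Sum.inl (a + i.1)) with hSe_def
  set Ss : Finset (ℕ ⊕ {n : ℕ // 1 ≤ n}) :=
    Finset.univ.image (fun i : Fin (k+2) => Sum.inr ⟨a + i.1, by omega⟩) with hSs_def
  have hXY : IndepFun X Y ℙ := by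
    have hdisj : Disjoint Se Ss := by
      rw [Finset.disjoint_left]
      rintro x hx hx'
      simp only [hSe_def, hSs_def, Finset.mem_image, Finset.mem_univ, true_and] at hx hx'
      obtain ⟨i, hi⟩ := hx
      obtain ⟨j, hj⟩ := hx'
      rw [← hi] at hj
      exact absurd hj (by simp)
    have base := hindep.indepFun_finset Se Ss hdisj hmeasSum
    have hΦ : Measurable (fun u : (↥Se) → ℝ => fun i : Fin (k+2) =>
        u ⟨Sum.inl (a + i.1), Finset.mem_image.mpr ⟨i, Finset.mem_univ i, rfl⟩⟩) :=
      measurable_pi_lambda _ (fun i => measurable_pi_apply _)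
    have hΨ : Measurable (fun u : (↥Ss) → ℝ => fun i : Fin (k+2) =>
        u ⟨Sum.inr ⟨a + i.1, by omega⟩, Finset.mem_image.mpr ⟨i, Finset.mem_univ i, rfl⟩⟩) :=
      measurable_pi_lambda _ (fun i => measurable_pi_apply _)
    exact base.comp hΦ hΨ
  have hindepXY : ℙ (X ⁻¹' A ∩ Y ⁻¹' B) = ℙ (X ⁻¹' A) * ℙ (Y ⁻¹' B) :=
    hXY.measure_inter_preimage_eq_mul A B hAmeas hBmeas
  -- Step C: probability of the s-event
  have hPB : ℙ (Y ⁻¹' B) = ENNReal.ofReal (p ^ k * (1 - p) ^ 2) := by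
    set sets : (ℕ ⊕ {n : ℕ // 1 ≤ n}) → Set ℝ :=
      Sum.elim (fun _ => (Set.univ : Set ℝ))
        (fun j => if j.1 = a ∨ j.1 = t then ({0} : Set ℝ) else {1}) with hsets_def
    have hms : ∀ i, i ∈ Ss → MeasurableSet (sets i) := by
      rintro (n | j) _
      · exact MeasurableSet.univ
      · simp only [hsets_def, Sum.elim_inr]
        split_ifs <;> exact measurableSet_singleton _
    have hYB : Y ⁻¹' B = ⋂ i ∈ Ss, (Sum.elim ε (fun j : {n : ℕ // 1 ≤ n} => s j.1)) i ⁻¹' sets i := by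
      ext ω
      simp only [Set.mem_preimage, hB_def, Set.mem_setOf_eq, Set.mem_iInter, hSs_def,
        Finset.mem_image, Finset.mem_univ, true_and, hY_def]
      constructor
      · rintro h x ⟨i, rfl⟩
        simp only [Sum.elim_inr, Set.mem_preimage, hsets_def]
        by_cases hc : a + i.1 = a ∨ a + i.1 = t
        · rw [if_pos hc]
          have := h i
          rw [if_pos (by omega)] at this
          simpa using this
        · rw [if_neg hc]
          have := h i
          rw [if_neg (by omega)] at this
          simpa using this
      · intro h i
        have hmem := h (Sum.inr ⟨a + i.1, by omega⟩) ⟨i, rfl⟩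
        simp only [Sum.elim_inr, Set.mem_preimage, hsets_def] at hmem
        by_cases hc : i.1 = 0 ∨ i.1 = k + 1
        · rw [if_pos hc]
          rw [if_pos (by omega)] at hmem
          simpa using hmem
        · rw [if_neg hc]
          rw [if_neg (by omega)] at hmem
          simpa using hmem
    have hinj : ∀ x ∈ (Finset.univ : Finset (Fin (k+2))), ∀ y ∈ Finset.univ,
        (fun i : Fin (k+2) => (Sum.inr ⟨a + i.1, by omega⟩ : ℕ ⊕ {n : ℕ // 1 ≤ n})) x
          = (fun i : Fin (k+2) => (Sum.inr ⟨a + i.1, by omega⟩ : ℕ ⊕ {n : ℕ // 1 ≤ n})) y → x = y := by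
      intro x _ y _ h
      simp only [Sum.inr.injEq, Subtype.mk.injEq] at h
      exact Fin.ext (by omega)
    rw [hYB, hindep.measure_inter_preimage_eq_mul Ss hms, hSs_def, Finset.prod_image hinj]
    have hterm : ∀ i : Fin (k+2),
        ℙ ((Sum.elim ε (fun j : {n : ℕ // 1 ≤ n} => s j.1)) (Sum.inr ⟨a + i.1, by omega⟩)
            ⁻¹' sets (Sum.inr ⟨a + i.1, by omega⟩))
          = ℙ {ω | s (a + i.1) ω = if a + i.1 = a ∨ a + i.1 = t then (0:ℝ) else 1} := by
      intro i
      congr 1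
      ext ω
      simp only [Sum.elim_inr, Set.mem_preimage, hsets_def, Set.mem_setOf_eq]
      split_ifs <;> simp
    calc (∏ i : Fin (k+2), ℙ ((Sum.elim ε (fun j : {n : ℕ // 1 ≤ n} => s j.1))
            (Sum.inr ⟨a + i.1, by omega⟩) ⁻¹' sets (Sum.inr ⟨a + i.1, by omega⟩)))
        = ∏ j ∈ Finset.range (k+2),
            ℙ {ω | s (a + j) ω = if a + j = a ∨ a + j = t then (0:ℝ) else 1} := by
          rw [Finset.prod_congr rfl (fun i _ => hterm i)]
          exact Fin.prod_univ_eq_prod_range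
            (fun j => ℙ {ω | s (a + j) ω = if a + j = a ∨ a + j = t then (0:ℝ) else 1}) (k+2)
      _ = ENNReal.ofReal (p ^ k * (1 - p) ^ 2) := by
          rw [Finset.prod_range_succ, Finset.prod_range_succ']
          have F0 : ℙ {ω | s (a + 0) ω = if a + 0 = a ∨ a + 0 = t then (0:ℝ) else 1}
              = ENNReal.ofReal (1 - p) := by
            rw [if_pos (Or.inl (by omega))]
            simpa using hs0 a ha1
          have Flast : ℙ {ω | s (a + (k+1)) ω = if a + (k+1) = a ∨ a + (k+1) = t then (0:ℝ) else 1}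
              = ENNReal.ofReal (1 - p) := by
            rw [if_pos (Or.inr (by omega)), show a + (k+1) = t by omega]
            exact hs0 t (by omega)
          have Fmid : ∀ j ∈ Finset.range k,
              ℙ {ω | s (a + (j+1)) ω = if a + (j+1) = a ∨ a + (j+1) = t then (0:ℝ) else 1}
                = ENNReal.ofReal p := by
            intro j hj
            rw [Finset.mem_range] at hj
            rw [if_neg (by omega)]
            exact hs1 _ (by omega)
          rw [Finset.prod_congr rfl Fmid, Finset.prod_const, Finset.card_range, F0, Flast]
          rw [ENNReal.ofReal_mul (by positivity), ENNReal.ofReal_pow hp0,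
            ENNReal.ofReal_pow (by linarith), sq]
          ring
  -- Step D: law of X equals law of the initial block
  have hzseq : ∀ ω j, bubbleSeq φ (fun n => ε n ω) j = z j ω := by
    intro ω j
    induction j with
    | zero => simpa [bubbleSeq] using (hz0 ω).symm
    | succ j ih => simp [bubbleSeq, ih, hzrec j ω]
  have hlaw : ∀ b : ℕ, (ℙ : Measure Ω).map (fun ω (i : Fin (k+2)) => ε (b + i.1) ω)
      = Measure.pi (fun _ : Fin (k+2) => (ℙ : Measure Ω).map (ε 0)) := by
    intro b
    haveI : IsProbabilityMeasure ((ℙ : Measure Ω).map (ε 0)) :=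
      Measure.isProbabilityMeasure_map (hεmeas 0).aemeasurable
    refine (Measure.pi_eq fun sets hsets => ?_).symm
    have hbmeas : Measurable (fun ω (i : Fin (k+2)) => ε (b + i.1) ω) :=
      measurable_pi_lambda _ (fun i => hεmeas _)
    rw [Measure.map_apply hbmeas (MeasurableSet.univ_pi hsets)]
    set S : Finset (ℕ ⊕ {n : ℕ // 1 ≤ n}) :=
      Finset.univ.image (fun i : Fin (k+2) => Sum.inl (b + i.1)) with hS_def
    set sets' : (ℕ ⊕ {n : ℕ // 1 ≤ n}) → Set ℝ :=
      Sum.elim (fun n => if h : n - b < k + 2 then sets ⟨n - b, h⟩ else Set.univ)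
        (fun _ => Set.univ) with hsets'_def
    have hms : ∀ i, i ∈ S → MeasurableSet (sets' i) := by
      rintro (n | j) _
      · simp only [hsets'_def, Sum.elim_inl]
        split_ifs
        · exact hsets _
        · exact MeasurableSet.univ
      · exact MeasurableSet.univ
    have hpre : (fun ω (i : Fin (k+2)) => ε (b + i.1) ω) ⁻¹' Set.pi Set.univ sets
        = ⋂ j ∈ S, (Sum.elim ε (fun j' : {n : ℕ // 1 ≤ n} => s j'.1)) j ⁻¹' sets' j := by
      ext ω
      simp only [Set.mem_preimage, Set.mem_pi, Set.mem_univ, true_implies, Set.mem_iInter,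
        hS_def, Finset.mem_image, Finset.mem_univ, true_and]
      constructor
      · rintro h x ⟨i, rfl⟩
        simp only [Sum.elim_inl, Set.mem_preimage, hsets'_def]
        rw [dif_pos (show b + i.1 - b < k + 2 by omega)]
        have hv : (⟨b + i.1 - b, by omega⟩ : Fin (k+2)) = i := Fin.ext (by simp)
        rw [hv]
        exact h i
      · intro h i
        have hmem := h (Sum.inl (b + i.1)) ⟨i, rfl⟩
        simp only [Sum.elim_inl, Set.mem_preimage, hsets'_def] at hmem
        rw [dif_pos (show b + i.1 - b < k + 2 by omega)] at hmem
        have hv : (⟨b + i.1 - b, by omega⟩ : Fin (k+2)) = i := Fin.ext (by simp)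
        rwa [hv] at hmem
    have hinj : ∀ x ∈ (Finset.univ : Finset (Fin (k+2))), ∀ y ∈ Finset.univ,
        (fun i : Fin (k+2) => (Sum.inl (b + i.1) : ℕ ⊕ {n : ℕ // 1 ≤ n})) x
          = (fun i : Fin (k+2) => (Sum.inl (b + i.1) : ℕ ⊕ {n : ℕ // 1 ≤ n})) y → x = y := by
      intro x _ y _ h
      simp only [Sum.inl.injEq] at h
      exact Fin.ext (by omega)
    rw [hpre, hindep.measure_inter_preimage_eq_mul S hms, hS_def, Finset.prod_image hinj]
    refine Finset.prod_congr rfl (fun i _ => ?_)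
    have hv : sets' (Sum.inl (b + i.1)) = sets i := by
      simp only [hsets'_def, Sum.elim_inl]
      rw [dif_pos (show b + i.1 - b < k + 2 by omega)]
      have hv2 : (⟨b + i.1 - b, by omega⟩ : Fin (k+2)) = i := Fin.ext (by simp)
      rw [hv2]
    rw [hv]
    show ℙ (ε (b + i.1) ⁻¹' sets i) = _
    rw [← Measure.map_apply (hεmeas (b + i.1)) (hsets i), (hεident (b + i.1)).map_eq]
  have hPA : ℙ (X ⁻¹' A) = ℙ {ω | ε (k + 1) ω - φ * |z k ω| ≤ c} := by
    have hmeas0 : Measurable (fun ω (i : Fin (k+2)) => ε (0 + i.1) ω) :=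
      measurable_pi_lambda _ (fun i => hεmeas _)
    calc ℙ (X ⁻¹' A) = (ℙ : Measure Ω).map X A := (Measure.map_apply hXmeas hAmeas).symm
      _ = (ℙ : Measure Ω).map (fun ω (i : Fin (k+2)) => ε (0 + i.1) ω) A := by
          rw [hX_def]
          rw [hlaw a, ← hlaw 0]
      _ = ℙ ((fun ω (i : Fin (k+2)) => ε (0 + i.1) ω) ⁻¹' A) :=
          Measure.map_apply hmeas0 hAmeas
      _ = ℙ {ω | ε (k + 1) ω - φ * |z k ω| ≤ c} := by
          congr 1
          ext ω
          simp only [Set.mem_preimage, hA_def, Set.mem_setOf_eq]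
          have h1 : (fun i : Fin (k+2) => ε (0 + i.1) ω) = (fun i : Fin (k+2) => ε i.1 ω) := by
            funext i; rw [Nat.zero_add]
          rw [h1, resid_apply φ k (fun n => ε n ω), hzseq ω k]
  rw [hset, hindepXY, hPB, hPA, mul_comm]
end

section
/- Let (ε_n)_{n≥0} be i.i.d. real random variables and (s_n)_{n≥1} be i.i.d. Bernoulli(p) random variables with p ∈ [0,1], and suppose (ε_n)_{n≥0} and (s_n)_{n≥1} are mutually independent. Fix φ ∈ ℝ and define y_0 = ε_0 and y_n = s_n φ|y_{n−1}| + ε_n for n ≥ 1; also define the auxiliary process z_0 = ε_0 and z_n = φ|z_{n−1}| + ε_n for n ≥ 1. Then for all integers k ≥ 1 and t ≥ k+1 and every c ∈ ℝ, P( y_t > c, s_t = s_{t−1} = ⋯ = s_{t−k+1} = 1, s_{t−k} = 0 ) = p^k (1−p) · P( z_k > c ). In particular, the conditional probability that a k-th cumulative bubble at time t is correctly tagged by the null-based rule y_t > c equals P(z_k > c). (This is Proposition 2.) -/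
open MeasureTheory ProbabilityTheory

/-- The pure-bubble recursion applied to an arbitrary input sequence. -/
noncomputable def bubbleZ (φ : ℝ) : ℕ → (ℕ → ℝ) → ℝ
  | 0, e => e 0
  | (n + 1), e => φ * |bubbleZ φ n e| + e (n + 1)

lemma bubbleZ_congr (φ : ℝ) : ∀ (n : ℕ) (e e' : ℕ → ℝ),
    (∀ i, i ≤ n → e i = e' i) → bubbleZ φ n e = bubbleZ φ n e' := by
  intro n
  induction n with
  | zero => intro e e' h; simpa [bubbleZ] using h 0 le_rfl
  | succ n ih =>
    intro e e' h
    simp only [bubbleZ]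
    rw [ih e e' fun i hi => h i (hi.trans (Nat.le_succ n)), h (n+1) le_rfl]

lemma bubbleZ_measurable (φ : ℝ) (n : ℕ) :
    Measurable (fun e : ℕ → ℝ => bubbleZ φ n e) := by
  induction n with
  | zero => simpa [bubbleZ] using measurable_pi_apply 0
  | succ n ih =>
    simp only [bubbleZ]
    exact ((measurable_const.mul ih.abs).add (measurable_pi_apply (n+1)))

/-- **Proposition 2** (null-based bubble tagging): with `y_0 = ε_0`,
`y_n = s_n φ|y_{n−1}| + ε_n` and the auxiliary process `z_0 = ε_0`,
`z_n = φ|z_{n−1}| + ε_n`, for all `k ≥ 1`, `t ≥ k+1` and `c ∈ ℝ`,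
`P(y_t > c, s_t = s_{t−1} = ⋯ = s_{t−k+1} = 1, s_{t−k} = 0) = p^k (1−p) · P(z_k > c)`;
i.e. the conditional probability that a `k`-th cumulative bubble is correctly tagged by
the rule `y_t > c` equals `P(z_k > c)`. -/
theorem snar_null_tagging_factorization
    {Ω : Type*} [MeasureSpace Ω] [IsProbabilityMeasure (ℙ : Measure Ω)]
    (ε : ℕ → Ω → ℝ) (s : ℕ → Ω → ℝ)
    (hεmeas : ∀ n, Measurable (ε n)) (hsmeas : ∀ n, Measurable (s n))
    -- the families (ε_n)_{n≥0} and (s_n)_{n≥1} are (mutually and internally) independent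
    (hindep : iIndepFun
      (Sum.elim ε (fun j : {n : ℕ // 1 ≤ n} => s j.1) : ℕ ⊕ {n : ℕ // 1 ≤ n} → Ω → ℝ) ℙ)
    (hεident : ∀ n, IdentDistrib (ε n) (ε 0) ℙ ℙ)
    (p : ℝ) (hp : p ∈ Set.Icc (0 : ℝ) 1)
    (hs1 : ∀ n, 1 ≤ n → ℙ {ω | s n ω = 1} = ENNReal.ofReal p)
    (hs0 : ∀ n, 1 ≤ n → ℙ {ω | s n ω = 0} = ENNReal.ofReal (1 - p))
    (φ : ℝ) (y z : ℕ → Ω → ℝ)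
    (hy0 : ∀ ω, y 0 ω = ε 0 ω)
    (hyrec : ∀ n : ℕ, ∀ ω, y (n + 1) ω = s (n + 1) ω * φ * |y n ω| + ε (n + 1) ω)
    (hz0 : ∀ ω, z 0 ω = ε 0 ω)
    (hzrec : ∀ n : ℕ, ∀ ω, z (n + 1) ω = φ * |z n ω| + ε (n + 1) ω) :
    ∀ k t : ℕ, 1 ≤ k → k + 1 ≤ t → ∀ c : ℝ,
      ℙ ({ω | c < y t ω}
          ∩ {ω | ∀ l : ℕ, l < k → s (t - l) ω = 1}
          ∩ {ω | s (t - k) ω = 0})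
        = ENNReal.ofReal (p ^ k * (1 - p)) * ℙ {ω | c < z k ω} := by
  classical
  intro k t hk hkt c
  set m : ℕ := t - k with hmdef
  have hm : 1 ≤ m := by omega
  have htm : t = m + k := by omega
  set f : ℕ ⊕ {n : ℕ // 1 ≤ n} → Ω → ℝ := Sum.elim ε (fun j => s j.1) with hf
  have hfmeas : ∀ j, Measurable (f j) := by
    rintro (n | r)
    · exact hεmeas n
    · exact hsmeas r.1
  -- the z process is the bubble recursion applied to ε
  have hzZ : ∀ n ω, z n ω = bubbleZ φ n (fun i => ε i ω) := by
    intro n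
    induction n with
    | zero => intro ω; simpa [bubbleZ] using hz0 ω
    | succ n ih => intro ω; simp [bubbleZ, hzrec n ω, ih ω]
  -- on the tagging event, y is the bubble recursion applied to shifted ε
  have hyW : ∀ ω, s m ω = 0 → (∀ l : ℕ, l < k → s (t - l) ω = 1) →
      ∀ j, j ≤ k → y (m + j) ω = bubbleZ φ j (fun i => ε (m + i) ω) := by
    intro ω h0 h1 j
    induction j with
    | zero =>
      intro _
      have hm' : m = (m - 1) + 1 := by omega
      have hym : y m ω = ε m ω := by
        rw [hm', hyrec, ← hm', h0]; ring
      simp [bubbleZ, hym]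
    | succ j ih =>
      intro hj
      have hsj : s (m + j + 1) ω = 1 := by
        have hl : k - (j + 1) < k := by omega
        have : t - (k - (j + 1)) = m + j + 1 := by omega
        rw [← this]; exact h1 _ hl
      have := ih (by omega)
      simp only [bubbleZ, ← Nat.add_assoc, hyrec (m + j) ω, hsj, this, one_mul]
  -- the key product-measure identity for tuples of ε's
  have hmapmeas : ∀ τ : Fin (k + 1) → ℕ,
      Measurable (fun ω (i : Fin (k + 1)) => ε (τ i) ω) := by
    intro τ; exact measurable_pi_lambda _ fun i => hεmeas (τ i)
  haveI : IsProbabilityMeasure ((ℙ : Measure Ω).map (ε 0)) :=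
    Measure.isProbabilityMeasure_map (hεmeas 0).aemeasurable
  have hmap : ∀ τ : Fin (k + 1) → ℕ, Function.Injective τ →
      (ℙ : Measure Ω).map (fun ω (i : Fin (k + 1)) => ε (τ i) ω)
        = Measure.pi (fun _ : Fin (k + 1) => (ℙ : Measure Ω).map (ε 0)) := by
    intro τ hτ
    refine (Measure.pi_eq fun sset hs => ?_).symm
    rw [Measure.map_apply (hmapmeas τ) (MeasurableSet.univ_pi hs)]
    have hpre : (fun ω (i : Fin (k + 1)) => ε (τ i) ω) ⁻¹' Set.pi Set.univ sset
        = ⋂ i : Fin (k + 1), ε (τ i) ⁻¹' sset i := by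
      ext ω; simp [Set.mem_pi]
    set sets : ℕ ⊕ {n : ℕ // 1 ≤ n} → Set ℝ :=
      Sum.elim (fun n => ⋂ i, ⋂ (_ : τ i = n), sset i) (fun _ => Set.univ) with hsets
    have hsetsτ : ∀ i, sets (Sum.inl (τ i)) = sset i := by
      intro i
      ext x
      simp only [hsets, Sum.elim_inl, Set.mem_iInter]
      exact ⟨fun h => h i rfl, fun h i' h' => by rwa [← hτ h'] at h⟩
    have hsetsmeas : ∀ j, j ∈ Finset.univ.image (fun i => Sum.inl (τ i)) →
        MeasurableSet (sets j) := by
      rintro (n | r) _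
      · exact MeasurableSet.iInter fun i => MeasurableSet.iInter fun _ => hs i
      · exact MeasurableSet.univ
    have key := hindep.measure_inter_preimage_eq_mul
      (S := Finset.univ.image (fun i => Sum.inl (τ i))) (sets := sets) hsetsmeas
    rw [Finset.set_biInter_finset_image] at key
    rw [Finset.prod_image (fun i _ i' _ h => hτ (Sum.inl.inj h))] at key
    have hL : ⋂ i ∈ Finset.univ, f (Sum.inl (τ i)) ⁻¹' sets (Sum.inl (τ i))
        = ⋂ i : Fin (k + 1), ε (τ i) ⁻¹' sset i := by
      simp only [Finset.mem_univ, Set.iInter_true, hsetsτ]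
      rfl
    rw [hL] at key
    rw [hpre, key]
    refine Finset.prod_congr rfl fun i _ => ?_
    rw [hsetsτ]
    show ℙ (ε (τ i) ⁻¹' sset i) = _
    rw [← Measure.map_apply (hεmeas (τ i)) (hs i), (hεident (τ i)).map_eq]
  -- the ε-event and the s-event
  set B : Set (Fin (k + 1) → ℝ) :=
    {v | c < bubbleZ φ k (fun n => if h : n < k + 1 then v ⟨n, h⟩ else 0)} with hB
  have hBmeas : MeasurableSet B := by
    have : Measurable fun v : Fin (k + 1) → ℝ =>
        bubbleZ φ k (fun n => if h : n < k + 1 then v ⟨n, h⟩ else 0) := by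
      refine (bubbleZ_measurable φ k).comp ?_
      refine measurable_pi_lambda _ fun n => ?_
      by_cases h : n < k + 1
      · simpa [h] using measurable_pi_apply (⟨n, h⟩ : Fin (k + 1))
      · simpa [h] using measurable_const
    exact measurableSet_lt measurable_const this
  set C : Set (Fin (k + 1) → ℝ) :=
    {v | ∀ i : Fin (k + 1), v i = if (i : ℕ) = 0 then 0 else 1} with hC
  have hCmeas : MeasurableSet C := by
    have : C = ⋂ i : Fin (k + 1),
        (fun v : Fin (k + 1) → ℝ => v i) ⁻¹' {if (i : ℕ) = 0 then (0:ℝ) else 1} := by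
      ext v; simp [hC]
    rw [this]
    exact MeasurableSet.iInter fun i =>
      (measurable_pi_apply i) (measurableSet_singleton _)
  set X : Ω → Fin (k + 1) → ℝ := fun ω i => ε (m + i) ω with hX
  set Y : Ω → Fin (k + 1) → ℝ := fun ω i => s (m + i) ω with hY
  -- bubbleZ evaluated on the truncation agrees with the shifted ε's
  have hBX : ∀ ω, bubbleZ φ k (fun n => if h : n < k + 1 then X ω ⟨n, h⟩ else 0)
      = bubbleZ φ k (fun i => ε (m + i) ω) := by
    intro ω
    refine bubbleZ_congr φ k _ _ fun i hi => ?_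
    have h : i < k + 1 := by omega
    simp [h, hX]
  -- event decomposition
  have hE : ({ω | c < y t ω}
          ∩ {ω | ∀ l : ℕ, l < k → s (t - l) ω = 1}
          ∩ {ω | s m ω = 0}) = X ⁻¹' B ∩ Y ⁻¹' C := by
    ext ω
    simp only [Set.mem_inter_iff, Set.mem_setOf_eq, Set.mem_preimage, hB, hC, hY]
    constructor
    · rintro ⟨⟨hc, h1⟩, h0'⟩
      have hyt : y t ω = bubbleZ φ k (fun i => ε (m + i) ω) := by
        rw [htm]; exact hyW ω h0' h1 k le_rfl
      refine ⟨by rw [hBX ω, ← hyt]; exact hc, fun i => ?_⟩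
      rcases Nat.eq_zero_or_pos i.1 with h | h
      · simpa [h] using h0'
      · have hne : (i : ℕ) ≠ 0 := by omega
        simp only [hne, if_neg, ite_false]
        have hl : k - (i : ℕ) < k := by omega
        have : t - (k - (i : ℕ)) = m + (i : ℕ) := by omega
        rw [← this]; exact h1 _ hl
    · rintro ⟨hc, hY'⟩
      have h0' : s m ω = 0 := by
        have := hY' ⟨0, by omega⟩
        simpa using this
      have h1 : ∀ l : ℕ, l < k → s (t - l) ω = 1 := by
        intro l hl
        have hkl : k - l < k + 1 := by omega
        have := hY' ⟨k - l, hkl⟩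
        have hne : k - l ≠ 0 := by omega
        simp only [hne, if_neg, ite_false] at this
        have harith : t - l = m + (k - l) := by omega
        rw [harith]; exact this
      have hyt : y t ω = bubbleZ φ k (fun i => ε (m + i) ω) := by
        rw [htm]; exact hyW ω h0' h1 k le_rfl
      refine ⟨⟨?_, h1⟩, h0'⟩
      rw [hyt, ← hBX ω]; exact hc
  rw [hE]
  -- independence of the two events
  have hmemS : ∀ i : Fin (k + 1),
      Sum.inl (m + (i : ℕ)) ∈ (Finset.univ.image
        (fun i : Fin (k + 1) => (Sum.inl (m + (i : ℕ)) : ℕ ⊕ {n : ℕ // 1 ≤ n}))) := by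
    intro i; exact Finset.mem_image_of_mem _ (Finset.mem_univ i)
  have hmemT : ∀ i : Fin (k + 1),
      (Sum.inr ⟨m + (i : ℕ), by omega⟩ : ℕ ⊕ {n : ℕ // 1 ≤ n}) ∈ (Finset.univ.image
        (fun i : Fin (k + 1) =>
          (Sum.inr ⟨m + (i : ℕ), by omega⟩ : ℕ ⊕ {n : ℕ // 1 ≤ n}))) := by
    intro i; exact Finset.mem_image_of_mem _ (Finset.mem_univ i)
  set S : Finset (ℕ ⊕ {n : ℕ // 1 ≤ n}) :=
    Finset.univ.image (fun i : Fin (k + 1) => (Sum.inl (m + (i : ℕ)))) with hS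
  set T : Finset (ℕ ⊕ {n : ℕ // 1 ≤ n}) :=
    Finset.univ.image (fun i : Fin (k + 1) =>
      (Sum.inr ⟨m + (i : ℕ), by omega⟩ : ℕ ⊕ {n : ℕ // 1 ≤ n})) with hT
  have hST : Disjoint S T := by
    rw [Finset.disjoint_left]
    intro a haS haT
    simp only [hS, hT, Finset.mem_image, Finset.mem_univ, true_and] at haS haT
    obtain ⟨i, rfl⟩ := haS
    obtain ⟨j, hj⟩ := haT
    exact absurd hj (by simp)
  have hIF := hindep.indepFun_finset S T hST hfmeas
  have hgS : Measurable fun v : (j : S) → ℝ =>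
      (fun i : Fin (k + 1) => v ⟨Sum.inl (m + (i : ℕ)), hmemS i⟩) :=
    measurable_pi_lambda _ fun i => measurable_pi_apply _
  have hgT : Measurable fun v : (j : T) → ℝ =>
      (fun i : Fin (k + 1) => v ⟨Sum.inr ⟨m + (i : ℕ), by omega⟩, hmemT i⟩) :=
    measurable_pi_lambda _ fun i => measurable_pi_apply _
  have hIF2 : IndepFun X Y ℙ := hIF.comp hgS hgT
  rw [hIF2.measure_inter_preimage_eq_mul _ _ hBmeas hCmeas]
  -- identify the ε-part with P(z_k > c)
  have hXB : ℙ (X ⁻¹' B) = ℙ {ω | c < z k ω} := by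
    have hτm : Function.Injective fun i : Fin (k + 1) => m + (i : ℕ) := by
      intro i j h
      have h' : m + (i : ℕ) = m + (j : ℕ) := h
      exact Fin.ext (by omega)
    have hτ0 : Function.Injective fun i : Fin (k + 1) => (i : ℕ) := by
      intro i j h; exact Fin.ext h
    have h1 : ℙ (X ⁻¹' B)
        = (ℙ : Measure Ω).map (fun ω (i : Fin (k + 1)) => ε (m + (i : ℕ)) ω) B := by
      rw [Measure.map_apply (hmapmeas _) hBmeas]
    have h2 : ℙ {ω | c < z k ω}
        = (ℙ : Measure Ω).map (fun ω (i : Fin (k + 1)) => ε ((i : ℕ)) ω) B := by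
      rw [Measure.map_apply (hmapmeas _) hBmeas]
      congr 1
      ext ω
      have hzB : bubbleZ φ k (fun n => if h : n < k + 1 then
          (fun i : Fin (k + 1) => ε ((i : ℕ)) ω) ⟨n, h⟩ else 0)
          = bubbleZ φ k (fun i => ε i ω) := by
        refine bubbleZ_congr φ k _ _ fun i hi => ?_
        have h : i < k + 1 := by omega
        simp [h]
      simp only [Set.mem_setOf_eq, Set.mem_preimage, hB, Set.mem_setOf_eq]
      rw [hzB, hzZ k ω]
    rw [h1, h2, hmap _ hτm, hmap _ hτ0]
  rw [hXB]
  -- compute the s-part probability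
  have hYC : ℙ (Y ⁻¹' C) = ENNReal.ofReal p ^ k * ENNReal.ofReal (1 - p) := by
    set sets : ℕ ⊕ {n : ℕ // 1 ≤ n} → Set ℝ :=
      Sum.elim (fun _ => Set.univ)
        (fun r => if r.1 = m then ({0} : Set ℝ) else {1}) with hsets
    have hsetsmeas : ∀ j, j ∈ T → MeasurableSet (sets j) := by
      rintro (n | r) _
      · exact MeasurableSet.univ
      · simp only [hsets, Sum.elim_inr]
        split <;> exact measurableSet_singleton _
    have key := hindep.measure_inter_preimage_eq_mul (S := T) (sets := sets) hsetsmeas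
    rw [hT, Finset.set_biInter_finset_image,
      Finset.prod_image (fun i _ j _ h => by
        have := Sum.inr.inj h
        have : m + (i : ℕ) = m + (j : ℕ) := congrArg Subtype.val this
        exact Fin.ext (by omega))] at key
    have hLH : ⋂ i ∈ (Finset.univ : Finset (Fin (k + 1))),
          f (Sum.inr ⟨m + (i : ℕ), by omega⟩)
          ⁻¹' sets (Sum.inr ⟨m + (i : ℕ), by omega⟩) = Y ⁻¹' C := by
      ext ω
      simp only [Set.mem_iInter, Finset.mem_univ, Set.iInter_true, Set.mem_preimage,
        hY, hC, Set.mem_setOf_eq, hsets, Sum.elim_inr, hf]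
      refine forall_congr' fun i => ?_
      rcases Nat.eq_zero_or_pos i.1 with h | h
      · simp [h]
      · have h1 : m + (i : ℕ) ≠ m := by omega
        have h2 : (i : ℕ) ≠ 0 := by omega
        simp [h1, h2]
    rw [hLH] at key
    rw [key]
    have hterm : ∀ i : Fin (k + 1),
        ℙ (f (Sum.inr ⟨m + (i : ℕ), by omega⟩)
            ⁻¹' sets (Sum.inr ⟨m + (i : ℕ), by omega⟩))
          = if (i : ℕ) = 0 then ENNReal.ofReal (1 - p) else ENNReal.ofReal p := by
      intro i
      rcases Nat.eq_zero_or_pos i.1 with h | h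
      · have h1 : m + (i : ℕ) = m := by omega
        rw [if_pos h]
        have hpre : f (Sum.inr ⟨m + (i : ℕ), by omega⟩)
            ⁻¹' sets (Sum.inr ⟨m + (i : ℕ), by omega⟩) = {ω | s m ω = 0} := by
          ext ω; simp [hsets, hf, h1]
        rw [hpre, hs0 m hm]
      · have h1 : m + (i : ℕ) ≠ m := by omega
        have h2 : (i : ℕ) ≠ 0 := by omega
        rw [if_neg h2]
        have hpre : f (Sum.inr ⟨m + (i : ℕ), by omega⟩)
            ⁻¹' sets (Sum.inr ⟨m + (i : ℕ), by omega⟩)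
            = {ω | s (m + (i : ℕ)) ω = 1} := by
          ext ω; simp [hsets, hf, h1, show i ≠ 0 from fun e => h2 (by rw [e]; rfl)]
        rw [hpre, hs1 _ (by omega)]
    calc ∏ i : Fin (k + 1), ℙ (f (Sum.inr ⟨m + (i : ℕ), by omega⟩)
            ⁻¹' sets (Sum.inr ⟨m + (i : ℕ), by omega⟩))
        = ∏ i : Fin (k + 1),
            (if (i : ℕ) = 0 then ENNReal.ofReal (1 - p) else ENNReal.ofReal p) :=
          Finset.prod_congr rfl fun i _ => hterm i
      _ = ENNReal.ofReal p ^ k * ENNReal.ofReal (1 - p) := by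
          rw [Fin.prod_univ_succ]
          have h0 : (if (((0 : Fin (k + 1))) : ℕ) = 0 then ENNReal.ofReal (1 - p)
              else ENNReal.ofReal p) = ENNReal.ofReal (1 - p) := by simp
          have hsucc : ∀ i : Fin k, (if ((i.succ : Fin (k + 1)) : ℕ) = 0
              then ENNReal.ofReal (1 - p) else ENNReal.ofReal p) = ENNReal.ofReal p := by
            intro i; simp
          rw [h0, Finset.prod_congr rfl fun i _ => hsucc i, Finset.prod_const,
            Finset.card_univ, Fintype.card_fin]
          ring
  rw [hYC]
  rw [ENNReal.ofReal_mul (pow_nonneg hp.1 k), ENNReal.ofReal_pow hp.1]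
  ring
end
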